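/- arXiv:2003.14405 — 6 statements merged into one kernel-verified Lean document; each statement's English description precedes it below -/
import Mathlib

section
/- Let n be a positive integer and let Φ : M_n → M_n be a mixed-unitary quantum channel with mixed-unitary rank N and Choi rank r. Then N ≤ r² − r + 1. -/
open scoped Kronecker ComplexOrder
open Matrix

/-- Square complex matrices indexed by `α`. -/
abbrev Mat (α : Type*) := Matrix α α ℂ

/-- The Choi matrix `J(Φ) = ∑_{j,k} Φ(E_{j,k}) ⊗ E_{j,k}` of a linear map between
matrix spaces. -/
noncomputable def choiMatrix {α β : Type*} [Fintype α] [DecidableEq α]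
    (Φ : Mat α →ₗ[ℂ] Mat β) : Matrix (β × α) (β × α) ℂ :=
  ∑ j : α, ∑ k : α, (Φ (Matrix.single j k 1)) ⊗ₖ (Matrix.single j k 1)

/-- The Choi rank of a linear map: the rank of its Choi matrix. -/
noncomputable def choiRank {α β : Type*} [Fintype α] [DecidableEq α] [Fintype β]
    (Φ : Mat α →ₗ[ℂ] Mat β) : ℕ :=
  (choiMatrix Φ).rank

/-- `A` is a Kraus representation of `Φ` (with the trace-preservation condition). -/
def IsKrausRep {α β : Type*} [Fintype α] [DecidableEq α] [Fintype β] {r : ℕ}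
    (Φ : Mat α →ₗ[ℂ] Mat β) (A : Fin r → Matrix β α ℂ) : Prop :=
  (∀ X, Φ X = ∑ k, A k * X * (A k)ᴴ) ∧ (∑ k, (A k)ᴴ * A k = 1)

/-- A quantum channel: a linear map admitting a Kraus representation
`Φ(X) = ∑ₖ Aₖ X Aₖ*` with `∑ₖ Aₖ* Aₖ = 1`. -/
def IsChannel {α β : Type*} [Fintype α] [DecidableEq α] [Fintype β]
    (Φ : Mat α →ₗ[ℂ] Mat β) : Prop :=
  ∃ (r : ℕ) (A : Fin r → Matrix β α ℂ), IsKrausRep Φ A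

/-- The dimension of the operator system `span{Aⱼᴴ Aₖ}` generated by a Kraus family. -/
noncomputable def krausOpSystemDim {α β : Type*} [Fintype α] [Fintype β] {r : ℕ}
    (A : Fin r → Matrix β α ℂ) : ℕ :=
  Module.finrank ℂ (Submodule.span ℂ {M : Mat α | ∃ j k, M = (A j)ᴴ * A k})

/-- A mixed-unitary decomposition of `Φ` with `N` terms: a probability vector `p`
and unitaries `U` with `Φ(X) = ∑ₖ pₖ Uₖ X Uₖ*`. -/
def IsMixedUnitaryDecomp {α : Type*} [Fintype α] [DecidableEq α] {N : ℕ}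
    (Φ : Mat α →ₗ[ℂ] Mat α) (p : Fin N → ℝ) (U : Fin N → Mat α) : Prop :=
  (∀ k, 0 ≤ p k) ∧ (∑ k, p k = 1) ∧ (∀ k, U k ∈ Matrix.unitaryGroup α ℂ) ∧
    (∀ X, Φ X = ∑ k, (p k : ℂ) • (U k * X * (U k)ᴴ))

/-- `Φ` is a mixed-unitary channel. -/
def IsMixedUnitary {α : Type*} [Fintype α] [DecidableEq α]
    (Φ : Mat α →ₗ[ℂ] Mat α) : Prop :=
  ∃ (N : ℕ) (p : Fin N → ℝ) (U : Fin N → Mat α), IsMixedUnitaryDecomp Φ p U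

/-- The mixed-unitary rank: the minimum number of unitary conjugations in a
mixed-unitary decomposition. -/
noncomputable def mixedUnitaryRank {α : Type*} [Fintype α] [DecidableEq α]
    (Φ : Mat α →ₗ[ℂ] Mat α) : ℕ :=
  sInf {N : ℕ | ∃ (p : Fin N → ℝ) (U : Fin N → Mat α), IsMixedUnitaryDecomp Φ p U}

/-- A mixed-unitary decomposition is the *unique* mixed-unitary decomposition of `Φ` if
every other mixed-unitary decomposition of `Φ` arises by partitioning its terms into
groups of phase-multiples of the `Uₖ` with matching total probabilities. -/
def IsUniqueMixedUnitaryDecomp {α : Type*} [Fintype α] [DecidableEq α] {N : ℕ}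
    (Φ : Mat α →ₗ[ℂ] Mat α) (p : Fin N → ℝ) (U : Fin N → Mat α) : Prop :=
  IsMixedUnitaryDecomp Φ p U ∧
    ∀ (t : ℕ) (q : Fin t → ℝ) (V : Fin t → Mat α), IsMixedUnitaryDecomp Φ q V →
      ∃ T : Fin t → Fin N,
        (∀ j, ∃ c : ℂ, ‖c‖ = 1 ∧ V j = c • U (T j)) ∧
        (∀ k, p k = ∑ j ∈ Finset.univ.filter (fun j => T j = k), q j)

/-- `Φ` possesses a unique mixed-unitary decomposition. -/
def HasUniqueMixedUnitaryDecomp {α : Type*} [Fintype α] [DecidableEq α]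
    (Φ : Mat α →ₗ[ℂ] Mat α) : Prop :=
  ∃ (N : ℕ) (p : Fin N → ℝ) (U : Fin N → Mat α), IsUniqueMixedUnitaryDecomp Φ p U

/-- `Ψ : M_α → M_N` is complementary to `Φ : M_α → M_α`: there is a Kraus representation
`Φ(X) = ∑ₖ Bₖ X Bₖ*` with `N` terms such that `Ψ(X)` has `(j,k)` entry `⟨Bₖ* Bⱼ, X⟩`. -/
def IsComplementary {α : Type*} [Fintype α] [DecidableEq α] {N : ℕ}
    (Φ : Mat α →ₗ[ℂ] Mat α) (Ψ : Mat α →ₗ[ℂ] Mat (Fin N)) : Prop :=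
  ∃ B : Fin N → Mat α, IsKrausRep Φ B ∧
    ∀ X, Ψ X = Matrix.of fun j k => ((((B k)ᴴ * B j)ᴴ) * X).trace

/-- A unitary channel: conjugation by a fixed unitary matrix. -/
def IsUnitaryChannel {α : Type*} [Fintype α] [DecidableEq α]
    (Ψ : Mat α →ₗ[ℂ] Mat α) : Prop :=
  ∃ U ∈ Matrix.unitaryGroup α ℂ, ∀ X, Ψ X = U * X * Uᴴ

/-- A correlation matrix: positive semidefinite with unit diagonal. -/
def IsCorrelation {α : Type*} [Fintype α] (C : Mat α) : Prop :=
  C.PosSemidef ∧ ∀ i, C i i = 1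

/-- A toroidal decomposition of `C` with `N` terms: `C = ∑ₖ pₖ uₖ uₖ*` where each `uₖ`
has all entries of modulus one. -/
def IsToroidalDecomp {α : Type*} [Fintype α] {N : ℕ}
    (C : Mat α) (p : Fin N → ℝ) (u : Fin N → α → ℂ) : Prop :=
  (∀ k, 0 ≤ p k) ∧ (∑ k, p k = 1) ∧ (∀ k i, ‖u k i‖ = 1) ∧
    C = ∑ k, (p k : ℂ) • Matrix.vecMulVec (u k) (star (u k))

/-- A correlation matrix is toroidal if it is a convex combination of rank-one
correlation matrices `u u*` with `u` having unimodular entries. -/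
def IsToroidal {α : Type*} [Fintype α] (C : Mat α) : Prop :=
  ∃ (N : ℕ) (p : Fin N → ℝ) (u : Fin N → α → ℂ), IsToroidalDecomp C p u

/-- The toroidal rank of a correlation matrix. -/
noncomputable def toroidalRank {α : Type*} [Fintype α] (C : Mat α) : ℕ :=
  sInf {N : ℕ | ∃ (p : Fin N → ℝ) (u : Fin N → α → ℂ), IsToroidalDecomp C p u}

/-!
If `Φ = ∑ₖ pₖ Uₖ · Uₖᴴ`, the Choi rank `r` is the dimension of the span `W` of the Kraus
operators `√pₖ Uₖ`, and `Φ` lies in the convex hull of the unitary channels `X ↦ V X Vᴴ` with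
`V ∈ W` unitary. Writing `V = ∑ᵢ cᵢ βᵢ` in a basis `β` of `W` turns such a channel into
`X ↦ ∑ᵢⱼ Hᵢⱼ βᵢ X βⱼᴴ` with `H = c cᴴ` Hermitian, and `V Vᴴ = 1` becomes the real-linear
constraint `∑ᵢⱼ Hᵢⱼ βᵢ βⱼᴴ = 1`. The Hermitian `r × r` matrices have real dimension `r²`, and the
constraint map has rank at least `r`: its image contains `C U₀ᴴ + U₀ Cᴴ` for `C ∈ W`, and the
kernel of this map on `W` meets its `i`-multiple trivially. Hence the affine span of these
channels has dimension at most `r² - r`, and Carathéodory's theorem yields a decomposition with at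
most `r² - r + 1` unitaries.
-/

open Module (finrank)

section ComplexStructure

variable {V : Type*} [AddCommGroup V] [Module ℂ V] [Module ℝ V] [IsScalarTower ℝ ℂ V]
  [FiniteDimensional ℂ V]

lemma finrank_real_le_of_forall_I_smul_mem (K : Submodule ℝ V)
    (hK : ∀ x ∈ K, Complex.I • x ∈ K → x = 0) : finrank ℝ K ≤ finrank ℂ V := by
  have : FiniteDimensional ℝ V := Module.Finite.trans ℂ V
  let σ : V ≃ₗ[ℝ] V :=
    (LinearEquiv.smulOfUnit (Units.mk0 Complex.I Complex.I_ne_zero)).restrictScalars ℝ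
  have hdisj : K ⊓ K.map σ.toLinearMap = ⊥ := by
    rw [Submodule.eq_bot_iff]
    rintro _ ⟨hx, y, hy, rfl⟩
    simp [hK y hy hx]
  have hsum := Submodule.finrank_sup_add_finrank_inf_eq K (K.map σ.toLinearMap)
  rw [hdisj, finrank_bot, LinearEquiv.finrank_map_eq] at hsum
  have hsup := Submodule.finrank_le (K ⊔ K.map σ.toLinearMap)
  rw [← Module.finrank_mul_finrank ℝ ℂ V, Complex.finrank_real_complex] at hsup
  omega

end ComplexStructure

lemma finrank_selfAdjoint_matrix_le (m : Type*) [Fintype m] :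
    finrank ℝ (selfAdjoint.submodule ℝ (Matrix m m ℂ)) ≤ Fintype.card m ^ 2 := by
  have := finrank_real_le_of_forall_I_smul_mem (selfAdjoint.submodule ℝ (Matrix m m ℂ)) ?_
  · simpa [sq, Module.finrank_matrix] using this
  intro H hH hIH
  have h₁ : star H = H := hH
  have h₂ : star (Complex.I • H) = Complex.I • H := hIH
  rw [star_smul, h₁, Complex.star_def, Complex.conj_I, neg_smul, neg_eq_iff_add_eq_zero,
    ← two_smul ℂ] at h₂
  simpa using h₂

variable {α : Type*} [Fintype α] [DecidableEq α]

section Choi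

variable {γ : Type*}

lemma choiMatrix_apply (Φ : Mat α →ₗ[ℂ] Mat γ) (a : γ) (b : α) (c : γ) (d : α) :
    choiMatrix Φ (a, b) (c, d) = Φ (single b d 1) a c := by
  simp [choiMatrix, Matrix.sum_apply, single_apply, ite_and]

lemma choiRank_eq_finrank_span_of_kraus [Fintype γ] {ι : Type*} [Fintype ι]
    {Φ : Mat α →ₗ[ℂ] Mat γ} {A : ι → Matrix γ α ℂ} (hΦ : ∀ X, Φ X = ∑ k, A k * X * (A k)ᴴ) :
    choiRank Φ = finrank ℂ (Submodule.span ℂ (Set.range A)) := by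
  let vec : Matrix γ α ℂ ≃ₗ[ℂ] (γ × α → ℂ) :=
    ((LinearEquiv.curry ℂ ℂ γ α).trans (ofLinearEquiv ℂ)).symm
  let K : Matrix ι (γ × α) ℂ := of fun k => vec (A k)
  have hchoi : choiMatrix Φ = Kᵀ * Kᵀᴴ := by
    ext ⟨a, b⟩ ⟨c, d⟩
    simp [choiMatrix_apply, hΦ, K, vec, Matrix.mul_apply, Matrix.sum_apply, single_apply, ite_and]
  rw [choiRank, hchoi, rank_self_mul_conjTranspose, rank_transpose, rank_eq_finrank_span_row,
    show Set.range K.row = vec.toLinearMap '' Set.range A from Set.range_comp vec A,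
    Submodule.span_image, LinearEquiv.finrank_map_eq]

end Choi

def unitaryConjugations (W : Submodule ℂ (Mat α)) : Set (Mat α →ₗ[ℂ] Mat α) :=
  {Ψ | ∃ V ∈ unitaryGroup α ℂ, V ∈ W ∧ Ψ = LinearMap.mulLeftRight ℂ (V, Vᴴ)}

namespace IsMixedUnitaryDecomp

variable {Φ : Mat α →ₗ[ℂ] Mat α} {N : ℕ} {p : Fin N → ℝ} {U : Fin N → Mat α}

lemma choiRank_eq (hd : IsMixedUnitaryDecomp Φ p U) :
    choiRank Φ = finrank ℂ (Submodule.span ℂ (Set.range fun k => (√(p k) : ℂ) • U k)) := by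
  refine choiRank_eq_finrank_span_of_kraus fun X => ?_
  rw [hd.2.2.2 X]
  refine Finset.sum_congr rfl fun k _ => ?_
  rw [conjTranspose_smul, Matrix.smul_mul, Matrix.mul_smul, Matrix.smul_mul, smul_smul,
    Complex.star_def, Complex.conj_ofReal, ← Complex.ofReal_mul, Real.mul_self_sqrt (hd.1 k)]

lemma mem_convexHull (hd : IsMixedUnitaryDecomp Φ p U) :
    Φ ∈ convexHull ℝ
      (unitaryConjugations (Submodule.span ℂ (Set.range fun k => (√(p k) : ℂ) • U k))) := by
  classical
  obtain ⟨hp₀, hp₁, hU, hΦ⟩ := hd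
  have hΦ' : Φ = Finset.univ.centerMass p fun k => LinearMap.mulLeftRight ℂ (U k, (U k)ᴴ) := by
    rw [Finset.centerMass_eq_of_sum_1 _ _ hp₁]
    ext1 X
    simp [hΦ]
  rw [hΦ', ← Finset.centerMass_filter_ne_zero]
  refine Finset.centerMass_mem_convexHull _ (fun k _ => hp₀ k)
    (by rw [Finset.sum_filter_ne_zero, hp₁]; exact one_pos) fun k hk => ⟨U k, hU k, ?_, rfl⟩
  have hsqrt : (√(p k) : ℂ) ≠ 0 := by
    exact_mod_cast Real.sqrt_ne_zero'.mpr ((hp₀ k).lt_of_ne' (Finset.mem_filter.mp hk).2)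
  rw [← inv_smul_smul₀ hsqrt (U k)]
  exact Submodule.smul_mem _ _ (Submodule.subset_span ⟨k, rfl⟩)

end IsMixedUnitaryDecomp

lemma finrank_le_finrank_span_mul_conjTranspose_add {U₀ : Mat α}
    (hU₀ : U₀ ∈ unitaryGroup α ℂ) (W : Submodule ℂ (Mat α)) :
    finrank ℂ W ≤ finrank ℝ (Submodule.span ℝ {M | ∃ C ∈ W, M = C * U₀ᴴ + U₀ * Cᴴ}) := by
  let f : W →ₗ[ℝ] Mat α :=
    { toFun C := C * U₀ᴴ + U₀ * (C : Mat α)ᴴ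
      map_add' C D := by
        simp only [Submodule.coe_add, conjTranspose_add, Matrix.add_mul, Matrix.mul_add]
        abel
      map_smul' a C := by simp [smul_add] }
  have hker : finrank ℝ (LinearMap.ker f) ≤ finrank ℂ W := by
    refine finrank_real_le_of_forall_I_smul_mem _ fun C hC hIC => ?_
    have h₁ : (C : Mat α) * U₀ᴴ + U₀ * (C : Mat α)ᴴ = 0 := hC
    have h₂ : Complex.I • ((C : Mat α) * U₀ᴴ - U₀ * (C : Mat α)ᴴ) = 0 := by
      simpa [f, Matrix.smul_mul, Matrix.mul_smul, smul_sub, sub_eq_add_neg] using hIC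
    have hCU : (C : Mat α) * U₀ᴴ = 0 := by
      rw [smul_eq_zero_iff_right Complex.I_ne_zero, sub_eq_zero] at h₂
      rw [← h₂, ← two_smul ℂ] at h₁
      exact (smul_eq_zero_iff_right two_ne_zero).mp h₁
    have hU₀' : U₀ᴴ * U₀ = 1 := mem_unitaryGroup_iff'.mp hU₀
    ext1
    rw [← Matrix.mul_one (C : Mat α), ← hU₀', ← Matrix.mul_assoc, hCU, Matrix.zero_mul,
      ZeroMemClass.coe_zero]
  have hrange : LinearMap.range f ≤ Submodule.span ℝ {M | ∃ C ∈ W, M = C * U₀ᴴ + U₀ * Cᴴ} := by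
    rintro _ ⟨C, rfl⟩
    exact Submodule.subset_span ⟨C, C.2, rfl⟩
  have hrank := LinearMap.finrank_range_add_finrank_ker f
  rw [← Module.finrank_mul_finrank ℝ ℂ W, Complex.finrank_real_complex] at hrank
  have := Submodule.finrank_mono hrange
  omega

section ChiMatrix

variable {ι : Type*} [Fintype ι] (β : ι → Mat α)

/-- The map whose χ-matrix with respect to the operator family `β` is `M`. -/
noncomputable def chiMap : Matrix ι ι ℂ →ₗ[ℂ] Mat α →ₗ[ℂ] Mat α :=
  ∑ i, ∑ j, (entryLinearMap ℂ ℂ i j).smulRight (LinearMap.mulLeftRight ℂ (β i, (β j)ᴴ))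

lemma chiMap_vecMulVec (c d : ι → ℂ) :
    chiMap β (vecMulVec c (star d)) =
      LinearMap.mulLeftRight ℂ (∑ i, c i • β i, (∑ j, d j • β j)ᴴ) := by
  ext1 X
  simp only [chiMap, LinearMap.sum_apply, LinearMap.smulRight_apply,
    entryLinearMap_apply, vecMulVec_apply, LinearMap.smul_apply, LinearMap.mulLeftRight_apply,
    conjTranspose_sum, conjTranspose_smul, Finset.sum_mul, Finset.mul_sum, Matrix.smul_mul,
    Matrix.mul_smul, smul_smul, Pi.star_apply, mul_comm (star (d _))]
  exact Finset.sum_comm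

lemma finrank_vectorSpan_unitaryConjugations_span_le :
    finrank ℝ (vectorSpan ℝ (unitaryConjugations (Submodule.span ℂ (Set.range β)))) ≤
      Fintype.card ι ^ 2 - finrank ℂ (Submodule.span ℂ (Set.range β)) := by
  set W := Submodule.span ℂ (Set.range β)
  rcases (unitaryConjugations W).eq_empty_or_nonempty with hS | ⟨_, U₀, hU₀, hU₀W, -⟩
  · rw [hS, vectorSpan_empty, finrank_bot]
    exact Nat.zero_le _
  let Herm := selfAdjoint.submodule ℝ (Matrix ι ι ℂ)
  let ev : Herm →ₗ[ℝ] Mat α :=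
    ((LinearMap.applyₗ 1 ∘ₗ chiMap β).restrictScalars ℝ).domRestrict Herm
  let G : Herm →ₗ[ℝ] Mat α →ₗ[ℂ] Mat α := (chiMap β).restrictScalars ℝ ∘ₗ Herm.subtype
  have hcoeff : ∀ V ∈ W, ∃ c : ι → ℂ, ∑ i, c i • β i = V := fun V hV =>
    Submodule.mem_span_range_iff_exists_fun ℂ |>.mp hV
  have hherm (c : ι → ℂ) : IsSelfAdjoint (vecMulVec c (star c)) :=
    (posSemidef_vecMulVec_self_star c).isHermitian.isSelfAdjoint
  have hspan : vectorSpan ℝ (unitaryConjugations W) ≤ (LinearMap.ker ev).map G := by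
    rw [vectorSpan_def, Submodule.span_le]
    rintro _ ⟨_, ⟨V₁, hV₁, hV₁W, rfl⟩, _, ⟨V₂, hV₂, hV₂W, rfl⟩, rfl⟩
    obtain ⟨c₁, rfl⟩ := hcoeff V₁ hV₁W
    obtain ⟨c₂, rfl⟩ := hcoeff V₂ hV₂W
    refine ⟨⟨vecMulVec c₁ (star c₁) - vecMulVec c₂ (star c₂), (hherm c₁).sub (hherm c₂)⟩, ?_, ?_⟩
    · have h₁ : _ * _ᴴ = 1 := mem_unitaryGroup_iff.mp hV₁
      have h₂ : _ * _ᴴ = 1 := mem_unitaryGroup_iff.mp hV₂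
      simp [ev, chiMap_vecMulVec, h₁, h₂]
    · simp [G, chiMap_vecMulVec]
  have hrange : Submodule.span ℝ {M | ∃ C ∈ W, M = C * U₀ᴴ + U₀ * Cᴴ} ≤ LinearMap.range ev := by
    rw [Submodule.span_le]
    rintro _ ⟨C, hC, rfl⟩
    obtain ⟨d, rfl⟩ := hcoeff C hC
    obtain ⟨e, rfl⟩ := hcoeff U₀ hU₀W
    refine ⟨⟨_, IsSelfAdjoint.add_star_self (vecMulVec d (star e))⟩, ?_⟩
    simp [ev, star_eq_conjTranspose, chiMap_vecMulVec]
  have hrank := LinearMap.finrank_range_add_finrank_ker ev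
  have hHerm : finrank ℝ Herm ≤ Fintype.card ι ^ 2 := finrank_selfAdjoint_matrix_le ι
  have hW := (finrank_le_finrank_span_mul_conjTranspose_add hU₀ W).trans
    (Submodule.finrank_mono hrange)
  calc finrank ℝ (vectorSpan ℝ (unitaryConjugations W))
      ≤ finrank ℝ ((LinearMap.ker ev).map G) := Submodule.finrank_mono hspan
    _ ≤ finrank ℝ (LinearMap.ker ev) := Submodule.finrank_map_le G _
    _ ≤ Fintype.card ι ^ 2 - finrank ℂ W := by omega

end ChiMatrix

lemma finrank_vectorSpan_unitaryConjugations_le (W : Submodule ℂ (Mat α)) :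
    finrank ℝ (vectorSpan ℝ (unitaryConjugations W)) ≤ finrank ℂ W ^ 2 - finrank ℂ W := by
  let b := Module.finBasis ℂ W
  have hb : Submodule.span ℂ (Set.range fun i => (b i : Mat α)) = W := by
    rw [show (Set.range fun i => (b i : Mat α)) = W.subtype '' Set.range b from
      Set.range_comp _ _, Submodule.span_image, b.span_eq, Submodule.map_subtype_top]
  have := finrank_vectorSpan_unitaryConjugations_span_le fun i => (b i : Mat α)
  rwa [hb, Fintype.card_fin] at this

lemma mixedUnitaryRank_le {Φ : Mat α →ₗ[ℂ] Mat α} {N : ℕ} {p : Fin N → ℝ} {U : Fin N → Mat α}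
    (h : IsMixedUnitaryDecomp Φ p U) : mixedUnitaryRank Φ ≤ N :=
  Nat.sInf_le ⟨p, U, h⟩

lemma mixedUnitaryRank_le_of_mem_convexHull {Φ : Mat α →ₗ[ℂ] Mat α} {W : Submodule ℂ (Mat α)}
    (hΦ : Φ ∈ convexHull ℝ (unitaryConjugations W)) :
    mixedUnitaryRank Φ ≤ finrank ℝ (vectorSpan ℝ (unitaryConjugations W)) + 1 := by
  obtain ⟨ι, _, z, w, hzS, hz, hw₀, hw₁, rfl⟩ := eq_pos_convex_span_of_mem_convexHull hΦ
  choose V hV _ hzV using fun i => hzS ⟨i, rfl⟩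
  let e := Fintype.equivFin ι
  have hdecomp : IsMixedUnitaryDecomp (∑ i, w i • z i) (w ∘ e.symm) (V ∘ e.symm) := by
    refine ⟨fun k => (hw₀ _).le, by simpa [Equiv.sum_comp] using hw₁, fun k => hV _, fun X => ?_⟩
    simp only [Function.comp_apply, e.symm.sum_comp fun i => (w i : ℂ) • (V i * X * (V i)ᴴ)]
    simp [hzV]
  calc mixedUnitaryRank (∑ i, w i • z i) ≤ Fintype.card ι := by
        simpa using mixedUnitaryRank_le hdecomp
    _ ≤ finrank ℝ (vectorSpan ℝ (Set.range z)) + 1 := hz.card_le_finrank_succ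
    _ ≤ _ := by gcongr; exact Submodule.finrank_mono (vectorSpan_mono ℝ hzS)

theorem stmt2_general (n : ℕ)
    (Φ : Mat (Fin n) →ₗ[ℂ] Mat (Fin n)) (hΦ : IsMixedUnitary Φ)
    (r N : ℕ) (hr : r = choiRank Φ) (hN : N = mixedUnitaryRank Φ) :
    N ≤ r ^ 2 - r + 1 := by
  obtain ⟨_, p, U, hd⟩ := hΦ
  have hdim := finrank_vectorSpan_unitaryConjugations_le
    (Submodule.span ℂ (Set.range fun k => (√(p k) : ℂ) • U k))
  rw [← hd.choiRank_eq, ← hr] at hdim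
  have hrank := mixedUnitaryRank_le_of_mem_convexHull hd.mem_convexHull
  omega

/-- Every mixed-unitary channel with Choi rank `r` and mixed-unitary
rank `N` satisfies `N ≤ r² - r + 1`. -/
theorem stmt2 (n : ℕ) (hn : 0 < n)
    (Φ : Mat (Fin n) →ₗ[ℂ] Mat (Fin n)) (hΦ : IsMixedUnitary Φ)
    (r N : ℕ) (hr : r = choiRank Φ) (hN : N = mixedUnitaryRank Φ) :
    N ≤ r ^ 2 - r + 1 :=
  stmt2_general n Φ hΦ r N hr hN
end

section
/- Let n and N be positive integers, let C ∈ M_n be a correlation matrix, and let Φ : M_n → M_n be the Schur channel defined by Φ(X) = C ⊙ X for every X ∈ M_n. Then the following are equivalent: (1) Φ is mixed unitary with mixed-unitary rank equal to N; (2) C is toroidal with toroidal rank equal to N. -/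
open scoped Kronecker ComplexOrder
open Matrix

/-!
Conjugation by a diagonal matrix `diag(u)` is Schur multiplication by `u u*`, and `diag(u)` is
unitary exactly when `u` has unimodular entries; so toroidal decompositions of `C` give
mixed-unitary decompositions of `Φ` with the same weights. Conversely, evaluating
`Φ(E_jj) = C ⊙ E_jj` at the entry `(i, i)`, `i ≠ j`, gives `0 = ∑ₖ pₖ |(Uₖ)ᵢⱼ|²`, so every
unitary carrying positive weight is diagonal. Hence for each `N` the two kinds of decompositions
with `N` terms exist simultaneously, and the two ranks are infima of the same set.
-/

namespace Matrix

variable {α : Type*} [Fintype α] [DecidableEq α]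

theorem diagonal_mul_mul_conjTranspose_diagonal (u : α → ℂ) (X : Mat α) :
    diagonal u * X * (diagonal u)ᴴ = vecMulVec u (star u) ⊙ X := by
  ext i j
  simp only [diagonal_conjTranspose, mul_diagonal, diagonal_mul, Pi.star_apply,
    RCLike.star_def, hadamard_apply, vecMulVec_apply]
  ring

theorem diagonal_mem_unitaryGroup_iff {u : α → ℂ} :
    diagonal u ∈ unitaryGroup α ℂ ↔ ∀ i, ‖u i‖ = 1 := by
  rw [mem_unitaryGroup_iff, star_eq_conjTranspose, diagonal_conjTranspose,
    diagonal_mul_diagonal, ← diagonal_one, diagonal_eq_diagonal_iff]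
  refine forall_congr' fun i => ?_
  rw [Pi.star_apply, Complex.star_def, Complex.mul_conj', ← Complex.ofReal_pow,
    Complex.ofReal_eq_one, pow_eq_one_iff_of_nonneg (norm_nonneg _) two_ne_zero]

theorem mul_single_mul_conjTranspose_apply_self (U : Mat α) (i j : α) :
    (U * single j j (1 : ℂ) * Uᴴ) i i = Complex.normSq (U i j) := by
  simp [mul_apply, single, ite_and, Complex.mul_conj]

end Matrix

open Matrix

section SchurChannel

variable {α : Type*} [Fintype α] [DecidableEq α] {N : ℕ} {C : Mat α}
  {Φ : Mat α →ₗ[ℂ] Mat α} {p : Fin N → ℝ}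

theorem IsMixedUnitaryDecomp.isDiag_of_pos (hΦ : ∀ X, Φ X = C ⊙ X)
    {U : Fin N → Mat α} (h : IsMixedUnitaryDecomp Φ p U) {k : Fin N} (hk : 0 < p k) :
    (U k).IsDiag := by
  obtain ⟨hp0, -, -, hmap⟩ := h
  intro i j hij
  have hsum : ∑ l, p l * Complex.normSq (U l i j) = 0 := by
    have h := congrFun (congrFun ((hΦ _).symm.trans (hmap (single j j 1))) i) i
    simp only [hadamard_apply, single_apply_of_row_ne hij.symm, mul_zero, Matrix.sum_apply,
      Matrix.smul_apply, mul_single_mul_conjTranspose_apply_self, smul_eq_mul] at h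
    exact_mod_cast h.symm
  have hterm := (Finset.sum_eq_zero_iff_of_nonneg fun l _ =>
    mul_nonneg (hp0 l) (Complex.normSq_nonneg _)).mp hsum k (Finset.mem_univ k)
  exact Complex.normSq_eq_zero.mp ((mul_eq_zero.mp hterm).resolve_left hk.ne')

theorem IsToroidalDecomp.isMixedUnitaryDecomp (hΦ : ∀ X, Φ X = C ⊙ X)
    {u : Fin N → α → ℂ} (h : IsToroidalDecomp C p u) :
    IsMixedUnitaryDecomp Φ p fun k => diagonal (u k) := by
  obtain ⟨hp0, hp1, hmod, rfl⟩ := h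
  refine ⟨hp0, hp1, fun k => diagonal_mem_unitaryGroup_iff.mpr (hmod k), fun X => ?_⟩
  simp_rw [hΦ, diagonal_mul_mul_conjTranspose_diagonal]
  ext i j
  simp only [hadamard_apply, Matrix.sum_apply, Matrix.smul_apply, smul_eq_mul, Finset.sum_mul,
    mul_assoc]

theorem IsMixedUnitaryDecomp.exists_isToroidalDecomp (hΦ : ∀ X, Φ X = C ⊙ X)
    {U : Fin N → Mat α} (h : IsMixedUnitaryDecomp Φ p U) :
    ∃ u : Fin N → α → ℂ, IsToroidalDecomp C p u := by
  have hdiag := fun k (hk : 0 < p k) => (h.isDiag_of_pos hΦ hk).diagonal_diag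
  obtain ⟨hp0, hp1, hU, hmap⟩ := h
  -- weightless terms are irrelevant, so their vectors may be replaced by the constant `1`
  refine ⟨fun k => if 0 < p k then diag (U k) else 1, hp0, hp1, fun k i => ?_, ?_⟩
  · dsimp only
    split_ifs with hk
    · exact diagonal_mem_unitaryGroup_iff.mp (by rw [hdiag k hk]; exact hU k) i
    · simp
  · calc C = Φ (of 1) := by rw [hΦ, hadamard_of_one]
      _ = _ := hmap _
      _ = _ := Finset.sum_congr rfl fun k _ => ?_
    dsimp only
    rcases (hp0 k).lt_or_eq with hk | hk
    · rw [if_pos hk, ← hdiag k hk, diagonal_mul_mul_conjTranspose_diagonal, hadamard_of_one,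
        diag_diagonal]
    · simp [← hk]

theorem exists_mixedUnitaryDecomp_iff_exists_toroidalDecomp (hΦ : ∀ X, Φ X = C ⊙ X) :
    (∃ (p : Fin N → ℝ) (U : Fin N → Mat α), IsMixedUnitaryDecomp Φ p U) ↔
      ∃ (p : Fin N → ℝ) (u : Fin N → α → ℂ), IsToroidalDecomp C p u :=
  ⟨fun ⟨p, _, h⟩ => ⟨p, h.exists_isToroidalDecomp hΦ⟩,
    fun ⟨p, _, h⟩ => ⟨p, _, h.isMixedUnitaryDecomp hΦ⟩⟩

end SchurChannel

theorem stmt10_general (n N : ℕ)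
    (C : Mat (Fin n))
    (Φ : Mat (Fin n) →ₗ[ℂ] Mat (Fin n))
    (hΦ : ∀ X, Φ X = Matrix.hadamard C X) :
    (IsMixedUnitary Φ ∧ mixedUnitaryRank Φ = N) ↔
      (IsToroidal C ∧ toroidalRank C = N) := by
  simp only [IsMixedUnitary, IsToroidal, mixedUnitaryRank, toroidalRank,
    exists_mixedUnitaryDecomp_iff_exists_toroidalDecomp hΦ]

/-- For a correlation matrix `C` and the Schur channel
`Φ(X) = C ⊙ X`: `Φ` is mixed unitary with mixed-unitary rank `N` iff `C` is toroidal
with toroidal rank `N`. -/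
theorem stmt10 (n N : ℕ) (hn : 0 < n) (hN : 0 < N)
    (C : Mat (Fin n)) (hC : IsCorrelation C)
    (Φ : Mat (Fin n) →ₗ[ℂ] Mat (Fin n))
    (hΦ : ∀ X, Φ X = Matrix.hadamard C X) :
    (IsMixedUnitary Φ ∧ mixedUnitaryRank Φ = N) ↔
      (IsToroidal C ∧ toroidalRank C = N) :=
  stmt10_general n N C Φ hΦ
end

section
/- Let C ∈ M_3 be a correlation matrix with rank(C) = 2 such that no off-diagonal entry of C has modulus 1. Then rank(C̄ ⊙ C) = 3, where C̄ ⊙ C is the entrywise product of the entrywise complex conjugate of C with C. -/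
open scoped Kronecker ComplexOrder
open Matrix

/-- Lemma 1 of the paper. If `C ∈ M_3` is a correlation matrix of
rank `2` none of whose off-diagonal entries has modulus one, then
`rank (conj C ⊙ C) = 3`. -/
theorem stmt12 (C : Mat (Fin 3)) (hC : IsCorrelation C) (hrank : C.rank = 2)
    (hoff : ∀ i j, i ≠ j → ‖C i j‖ ≠ 1) :
    (Matrix.hadamard (C.map (starRingEnd ℂ)) C).rank = 3 := by
  obtain ⟨hpsd, hdiag⟩ := hC
  have herm := hpsd.isHermitian
  have h10 : C 1 0 = starRingEnd ℂ (C 0 1) := by rw [← herm.apply 0 1]; simp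
  have h20 : C 2 0 = starRingEnd ℂ (C 0 2) := by rw [← herm.apply 0 2]; simp
  have h21 : C 2 1 = starRingEnd ℂ (C 1 2) := by rw [← herm.apply 1 2]; simp
  -- off-diagonal entries have modulus < 1
  have key : ∀ w : ℂ, ‖w‖ ≠ 1 → Complex.normSq w ≤ 1 → Complex.normSq w < 1 := by
    intro w hne hle
    refine lt_of_le_of_ne hle fun h => hne ?_
    rw [Complex.norm_def, h, Real.sqrt_one]
  have ha1 : Complex.normSq (C 0 1) < 1 := by
    refine key _ (hoff 0 1 (by decide)) ?_
    have hq := hpsd.re_dotProduct_nonneg ![(1 : ℂ), -(starRingEnd ℂ (C 0 1)), 0]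
    simp [dotProduct, Matrix.mulVec, Fin.sum_univ_three, hdiag, h10] at hq
    rw [Complex.normSq_apply]; linarith
  have hb1 : Complex.normSq (C 0 2) < 1 := by
    refine key _ (hoff 0 2 (by decide)) ?_
    have hq := hpsd.re_dotProduct_nonneg ![(1 : ℂ), 0, -(starRingEnd ℂ (C 0 2))]
    simp [dotProduct, Matrix.mulVec, Fin.sum_univ_three, hdiag, h20] at hq
    rw [Complex.normSq_apply]; linarith
  have hc1 : Complex.normSq (C 1 2) < 1 := by
    refine key _ (hoff 1 2 (by decide)) ?_
    have hq := hpsd.re_dotProduct_nonneg ![0, (1 : ℂ), -(starRingEnd ℂ (C 1 2))]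
    simp [dotProduct, Matrix.mulVec, Fin.sum_univ_three, hdiag, h21] at hq
    rw [Complex.normSq_apply]; linarith
  -- det C = 0 since rank C = 2 < 3
  have hdetC : C.det = 0 := by
    by_contra hne
    have hu : IsUnit C := (Matrix.isUnit_iff_isUnit_det C).mpr (isUnit_iff_ne_zero.mpr hne)
    have h3 := Matrix.rank_of_isUnit C hu
    rw [hrank] at h3
    simp at h3
  rw [Matrix.det_fin_three] at hdetC
  simp only [hdiag, h10, h20, h21, one_mul, mul_one] at hdetC
  -- the real relation coming from det C = 0
  have hw : starRingEnd ℂ (C 0 1 * C 1 2 * starRingEnd ℂ (C 0 2))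
      = C 0 2 * starRingEnd ℂ (C 0 1) * starRingEnd ℂ (C 1 2) := by
    rw [RingHom.map_mul, RingHom.map_mul, Complex.conj_conj]; ring
  have hkeyC : ((2 * (C 0 1 * C 1 2 * starRingEnd ℂ (C 0 2)).re : ℝ) : ℂ)
      = ((Complex.normSq (C 0 1) : ℝ) : ℂ) + ((Complex.normSq (C 0 2) : ℝ) : ℂ)
        + ((Complex.normSq (C 1 2) : ℝ) : ℂ) - 1 := by
    calc ((2 * (C 0 1 * C 1 2 * starRingEnd ℂ (C 0 2)).re : ℝ) : ℂ)
        = (C 0 1 * C 1 2 * starRingEnd ℂ (C 0 2))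
          + starRingEnd ℂ (C 0 1 * C 1 2 * starRingEnd ℂ (C 0 2)) :=
          (Complex.add_conj _).symm
      _ = _ := by
          rw [hw]
          linear_combination hdetC + Complex.mul_conj (C 0 1) + Complex.mul_conj (C 0 2)
            + Complex.mul_conj (C 1 2)
  have hreal : 2 * (C 0 1 * C 1 2 * starRingEnd ℂ (C 0 2)).re
      = Complex.normSq (C 0 1) + Complex.normSq (C 0 2) + Complex.normSq (C 1 2) - 1 := by
    exact_mod_cast hkeyC
  -- bound on the real part via normSq
  have hr2 : (C 0 1 * C 1 2 * starRingEnd ℂ (C 0 2)).re ^ 2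
      ≤ Complex.normSq (C 0 1) * Complex.normSq (C 0 2) * Complex.normSq (C 1 2) := by
    have h1 : Complex.normSq (C 0 1 * C 1 2 * starRingEnd ℂ (C 0 2))
        = Complex.normSq (C 0 1) * Complex.normSq (C 0 2) * Complex.normSq (C 1 2) := by
      rw [Complex.normSq_mul, Complex.normSq_mul, Complex.normSq_conj]; ring
    nlinarith [Complex.normSq_apply (C 0 1 * C 1 2 * starRingEnd ℂ (C 0 2)),
      sq_nonneg (C 0 1 * C 1 2 * starRingEnd ℂ (C 0 2)).im]
  -- positivity of the determinant of the Hadamard product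
  have hpos : 0 < 1 - Complex.normSq (C 0 1) ^ 2 - Complex.normSq (C 0 2) ^ 2
      - Complex.normSq (C 1 2) ^ 2
      + 2 * (Complex.normSq (C 0 1) * Complex.normSq (C 0 2) * Complex.normSq (C 1 2)) := by
    have ha0 := Complex.normSq_nonneg (C 0 1)
    have hb0 := Complex.normSq_nonneg (C 0 2)
    have hc0 := Complex.normSq_nonneg (C 1 2)
    have hP : 0 < (1 - Complex.normSq (C 0 1)) * (1 - Complex.normSq (C 0 2))
        * (1 - Complex.normSq (C 1 2)) := by
      apply mul_pos (mul_pos (by linarith) (by linarith)) (by linarith)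
    have h4 : (Complex.normSq (C 0 1) + Complex.normSq (C 0 2) + Complex.normSq (C 1 2) - 1) ^ 2
        ≤ 4 * (Complex.normSq (C 0 1) * Complex.normSq (C 0 2) * Complex.normSq (C 1 2)) := by
      rw [← hreal]; nlinarith [hr2]
    nlinarith [hP, h4]
  -- compute the determinant of the Hadamard product
  have e1 : starRingEnd ℂ (C 0 1) * C 0 1 = ((Complex.normSq (C 0 1) : ℝ) : ℂ) := by
    rw [mul_comm, Complex.mul_conj]
  have e2 : starRingEnd ℂ (C 0 2) * C 0 2 = ((Complex.normSq (C 0 2) : ℝ) : ℂ) := by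
    rw [mul_comm, Complex.mul_conj]
  have e3 : starRingEnd ℂ (C 1 2) * C 1 2 = ((Complex.normSq (C 1 2) : ℝ) : ℂ) := by
    rw [mul_comm, Complex.mul_conj]
  have hdetM : (Matrix.hadamard (C.map (starRingEnd ℂ)) C).det
      = ((1 - Complex.normSq (C 0 1) ^ 2 - Complex.normSq (C 0 2) ^ 2
          - Complex.normSq (C 1 2) ^ 2
          + 2 * (Complex.normSq (C 0 1) * Complex.normSq (C 0 2) * Complex.normSq (C 1 2)) : ℝ)
          : ℂ) := by
    rw [Matrix.det_fin_three]
    simp only [Matrix.hadamard_apply, Matrix.map_apply, hdiag, h10, h20, h21, _root_.map_one,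
      Complex.conj_conj]
    rw [e1, e2, e3, Complex.mul_conj, Complex.mul_conj, Complex.mul_conj]
    push_cast
    ring
  have hdetne : (Matrix.hadamard (C.map (starRingEnd ℂ)) C).det ≠ 0 := by
    rw [hdetM]
    exact_mod_cast hpos.ne'
  have hfin := Matrix.rank_of_isUnit (Matrix.hadamard (C.map (starRingEnd ℂ)) C)
    ((Matrix.isUnit_iff_isUnit_det _).mpr (isUnit_iff_ne_zero.mpr hdetne))
  simpa using hfin
end

section
/- Let C ∈ M_4 be the correlation matrix with ones on the diagonal, entries C(1,2) = C(2,1) = C(1,3) = C(3,1) = 1/√2, and all other entries 0. Then rank(C) = 3 and C is toroidal with toroidal rank equal to 4. -/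
open scoped Kronecker ComplexOrder
open Matrix

/-!
The vector `v = (1, -1/√2, -1/√2, 0)` spans the kernel of `C`, whence `rank C = 3`. In a toroidal
decomposition `C = ∑ pₖ uₖuₖ*`, the identity `v* C v = ∑ pₖ |⟨uₖ, v⟩|² = 0` makes every `uₖ` with
`pₖ > 0` orthogonal to `v`. As its entries are unimodular, this forces `uₖ(2) conj uₖ(3) = tₖ i`
with `tₖ = ±1` (indices from 1 here, from 0 in the code). Writing `Yₖ = uₖ(2) conj uₖ(4)`, also
unimodular, the zero entries `(2,3)`, `(2,4)`, `(3,4)` of `C` say `∑ pₖtₖ = 0`, `∑ pₖYₖ = 0` and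
`∑ pₖtₖYₖ = 0`. So each sign class `tₖ = ±1` has weight `1/2` and balances the unit vectors `Yₖ`
on its own; it therefore has at least two members, and there are at least four terms. Four
suffice: `(1, ω, ω̄, ±1)` and `(1, ω̄, ω, ±1)` with `ω = e^{iπ/4}`, each with weight `1/4`.
-/

open Complex Finset ComplexConjugate

lemma one_lt_card_filter_ne_zero_of_sum_smul_eq_zero {ι K V : Type*} [Field K] [DecidableEq K]
    [AddCommGroup V] [Module K V] {s : Finset ι} {w : ι → K} {Y : ι → V}
    (hw : ∑ i ∈ s, w i ≠ 0) (hY : ∀ i ∈ s, Y i ≠ 0) (h : ∑ i ∈ s, w i • Y i = 0) :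
    1 < #{i ∈ s | w i ≠ 0} := by
  obtain ⟨a, ha, hwa⟩ := exists_ne_zero_of_sum_ne_zero hw
  rw [one_lt_card]
  by_contra! hsingle
  have hrest : ∀ b ∈ s, b ≠ a → w b = 0 := fun b hb hba => by
    by_contra hwb
    exact hba (hsingle b (mem_filter.2 ⟨hb, hwb⟩) a (mem_filter.2 ⟨ha, hwa⟩))
  rw [sum_eq_single_of_mem a ha fun b hb hba => by rw [hrest b hb hba, zero_smul]] at h
  exact smul_ne_zero hwa (hY a ha) h

lemma four_le_card_of_signed_weights {ι V : Type*} [Fintype ι] [AddCommGroup V]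
    [Module ℝ V] {p t : ι → ℝ} {Y : ι → V} (hps : ∑ k, p k = 1)
    (ht : ∀ k, p k ≠ 0 → t k = 1 ∨ t k = -1) (hY : ∀ k, Y k ≠ 0)
    (hpt : ∑ k, p k * t k = 0) (hpY : ∑ k, p k • Y k = 0)
    (hptY : ∑ k, (p k * t k) • Y k = 0) :
    4 ≤ Fintype.card ι := by
  -- `w σ` restricts `p` to the class `t = σ`, written linearly in `t` so that its sums are
  -- combinations of the given ones.
  set w : ℝ → ι → ℝ := fun σ k => p k * (1 + σ * t k) / 2
  set S : ℝ → Finset ι := fun σ => {k | w σ k ≠ 0}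
  have hS : ∀ σ, 1 < #(S σ) := fun σ => by
    refine one_lt_card_filter_ne_zero_of_sum_smul_eq_zero ?_ (fun k _ => hY k) ?_
    · have : ∑ k, w σ k = (∑ k, p k + σ * ∑ k, p k * t k) / 2 := by
        simp only [w, mul_sum, ← sum_add_distrib, sum_div]
        exact sum_congr rfl fun k _ => by ring
      rw [this, hps, hpt]
      norm_num
    · have : ∑ k, w σ k • Y k =
          (1 / 2 : ℝ) • ∑ k, p k • Y k + (σ / 2) • ∑ k, (p k * t k) • Y k := by
        simp only [w, smul_sum, ← sum_add_distrib]
        exact sum_congr rfl fun k _ => by module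
      rw [this, hpY, hptY, smul_zero, smul_zero, add_zero]
  have hdisj : Disjoint (S 1) (S (-1)) := by
    rw [disjoint_filter]
    intro k _ h₁ h₂
    have hp : p k ≠ 0 := fun h => h₁ (by simp [w, h])
    rcases ht k hp with h | h <;> simp_all [w]
  classical
  calc 4 ≤ #(S 1) + #(S (-1)) := by linarith [hS 1, hS (-1)]
    _ = #(S 1 ∪ S (-1)) := (card_union_of_disjoint hdisj).symm
    _ ≤ Fintype.card ι := card_le_univ _

lemma sum_smul_vecMulVec_star_apply {ι κ : Type*} [Fintype κ] (p : κ → ℝ) (u : κ → ι → ℂ)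
    (i j : ι) :
    (∑ k, (p k : ℂ) • vecMulVec (u k) (star (u k))) i j = ∑ k, p k * (u k i * conj (u k j)) := by
  simp [Matrix.sum_apply, vecMulVec_apply]

lemma star_dotProduct_eq_zero_of_mulVec_eq_zero {ι κ : Type*} [Fintype ι] [Fintype κ]
    {p : κ → ℝ} {u : κ → ι → ℂ} {v : ι → ℂ} (hp : ∀ k, 0 ≤ p k)
    (hv : (∑ k, (p k : ℂ) • vecMulVec (u k) (star (u k))) *ᵥ v = 0) {k : κ} (hk : p k ≠ 0) :
    star (u k) ⬝ᵥ v = 0 := by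
  have hquad : ∑ k, p k * normSq (star (u k) ⬝ᵥ v) = 0 := by
    have := congrArg (star v ⬝ᵥ ·) hv
    simp only [sum_mulVec, smul_mulVec, vecMulVec_mulVec, dotProduct_sum, dotProduct_smul,
      op_smul_eq_mul, smul_eq_mul, dotProduct_zero] at this
    rw [← ofReal_inj, ofReal_zero, ← this]
    push_cast
    refine sum_congr rfl fun j _ => ?_
    rw [star_dotProduct v (u j), normSq_eq_conj_mul_self]
    rfl
  have := (sum_eq_zero_iff_of_nonneg fun j _ => mul_nonneg (hp j) (normSq_nonneg _)).1 hquad k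
    (mem_univ k)
  exact normSq_eq_zero.1 ((mul_eq_zero.1 this).resolve_left hk)

lemma re_mul_conj_eq_zero_of_norm_add_sq {a b : ℂ} (ha : ‖a‖ = 1) (hb : ‖b‖ = 1)
    (hab : ‖a + b‖ ^ 2 = 2) : (a * conj b).re = 0 := by
  have := normSq_add a b
  simp only [normSq_eq_norm_sq, ha, hb, hab] at this
  linarith

lemma im_eq_one_or_neg_one_of_re_eq_zero {z : ℂ} (hz : ‖z‖ = 1) (hre : z.re = 0) :
    z.im = 1 ∨ z.im = -1 := by
  have := normSq_apply z
  rw [normSq_eq_norm_sq, hz, hre] at this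
  exact mul_self_eq_one_iff.1 (by linarith)

lemma conj_mul_conj_mul_mul_conj {a b c : ℂ} (ha : ‖a‖ = 1) :
    conj (a * conj b) * (a * conj c) = b * conj c := by
  have : conj a * a = 1 := by simp [conj_mul', ha]
  rw [map_mul, conj_conj]
  linear_combination (b * conj c) * this

section Example

local notation "ρ" => ((Real.sqrt 2 : ℂ)⁻¹)

noncomputable def exampleCorr : Mat (Fin 4) :=
  !![1, ρ, ρ, 0;
     ρ, 1, 0, 0;
     ρ, 0, 1, 0;
     0, 0, 0, 1]

lemma inv_sqrt_two_sq : ρ ^ 2 = 1 / 2 := by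
  rw [inv_pow, ← ofReal_pow, Real.sq_sqrt zero_le_two]; norm_num

lemma exampleCorr_mulVec_kerVec : exampleCorr *ᵥ ![1, -ρ, -ρ, 0] = 0 := by
  ext i
  fin_cases i <;> simp [exampleCorr, mulVec, dotProduct, Fin.sum_univ_four]
  linear_combination (-2) * inv_sqrt_two_sq

lemma ker_exampleCorr : LinearMap.ker exampleCorr.mulVecLin = ℂ ∙ ![1, -ρ, -ρ, 0] := by
  ext w
  rw [LinearMap.mem_ker, mulVecLin_apply, Submodule.mem_span_singleton]
  constructor
  · intro hw
    have h₁ : ρ * w 0 + w 1 = 0 := by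
      simpa [exampleCorr, mulVec, dotProduct, Fin.sum_univ_four] using congrFun hw 1
    have h₂ : ρ * w 0 + w 2 = 0 := by
      simpa [exampleCorr, mulVec, dotProduct, Fin.sum_univ_four] using congrFun hw 2
    have h₃ : w 3 = 0 := by
      simpa [exampleCorr, mulVec, dotProduct, Fin.sum_univ_four] using congrFun hw 3
    refine ⟨w 0, ?_⟩
    ext i
    fin_cases i <;> simp
    · linear_combination -h₁
    · linear_combination -h₂
    · exact h₃.symm
  · rintro ⟨a, rfl⟩
    rw [mulVec_smul, exampleCorr_mulVec_kerVec, smul_zero]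

lemma rank_exampleCorr : exampleCorr.rank = 3 := by
  have hker : Module.finrank ℂ (LinearMap.ker exampleCorr.mulVecLin) = 1 := by
    rw [ker_exampleCorr]
    exact finrank_span_singleton (by simp)
  have := LinearMap.finrank_range_add_finrank_ker exampleCorr.mulVecLin
  rw [hker, Module.finrank_fin_fun] at this
  exact Nat.add_right_cancel this

noncomputable def zeta8 : ℂ := ρ * (1 + I)

lemma norm_zeta8 : ‖zeta8‖ = 1 := by
  have h : ‖(1 + I : ℂ)‖ = Real.sqrt 2 := by
    simpa [one_add_one_eq_two] using norm_add_mul_I 1 1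
  simp [zeta8, h, abs_of_pos (Real.sqrt_pos.2 two_pos)]

noncomputable def exampleVec : Fin 4 → Fin 4 → ℂ :=
  ![![1, zeta8, conj zeta8, 1], ![1, zeta8, conj zeta8, -1],
    ![1, conj zeta8, zeta8, 1], ![1, conj zeta8, zeta8, -1]]

lemma isToroidalDecomp_exampleVec : IsToroidalDecomp exampleCorr (fun _ => 1 / 4) exampleVec := by
  refine ⟨fun _ => by norm_num, by norm_num [Fin.sum_univ_four], fun k i => ?_, ?_⟩
  · fin_cases k <;> fin_cases i <;> simp [exampleVec, norm_zeta8]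
  · ext i j
    rw [sum_smul_vecMulVec_star_apply]
    fin_cases i <;> fin_cases j <;>
      simp [exampleCorr, exampleVec, Fin.sum_univ_four, zeta8] <;>
      ring_nf <;> simp only [I_sq, inv_sqrt_two_sq] <;> ring

lemma re_mul_conj_eq_zero_of_star_dotProduct_kerVec {x : Fin 4 → ℂ} (hx : ∀ i, ‖x i‖ = 1)
    (h : star x ⬝ᵥ ![1, -ρ, -ρ, 0] = 0) : (x 1 * conj (x 2)).re = 0 := by
  refine re_mul_conj_eq_zero_of_norm_add_sq (hx 1) (hx 2) ?_
  have hρ : (Real.sqrt 2 : ℂ) * ρ = 1 := mul_inv_cancel₀ (by simp)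
  have h' : conj (x 0) - ρ * conj (x 1) - ρ * conj (x 2) = 0 := by
    simpa [dotProduct, Fin.sum_univ_four, sub_eq_add_neg, mul_comm] using h
  have hsum : conj (x 1 + x 2) = Real.sqrt 2 * conj (x 0) := by
    rw [map_add]
    linear_combination (-Real.sqrt 2 : ℂ) * h' - (conj (x 1) + conj (x 2)) * hρ
  have hnorm : ‖x 1 + x 2‖ = Real.sqrt 2 := by
    rw [← norm_conj, hsum, norm_mul, norm_conj, hx 0, mul_one, norm_real, Real.norm_eq_abs,
      abs_of_nonneg (Real.sqrt_nonneg 2)]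
  rw [hnorm, Real.sq_sqrt zero_le_two]

lemma four_le_of_isToroidalDecomp_exampleCorr {N : ℕ} {p : Fin N → ℝ} {u : Fin N → Fin 4 → ℂ}
    (h : IsToroidalDecomp exampleCorr p u) : 4 ≤ N := by
  obtain ⟨hp, hps, hu, hC⟩ := h
  have hentry : ∀ i j, exampleCorr i j = ∑ k, p k * (u k i * conj (u k j)) := fun i j => by
    rw [hC]; exact sum_smul_vecMulVec_star_apply p u i j
  set Z : Fin N → ℂ := fun k => u k 1 * conj (u k 2)
  set t : Fin N → ℝ := fun k => (Z k).im
  set Y : Fin N → ℂ := fun k => u k 1 * conj (u k 3)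
  have hZ : ∀ k, p k ≠ 0 → (Z k).re = 0 := fun k hk =>
    re_mul_conj_eq_zero_of_star_dotProduct_kerVec (hu k)
      (star_dotProduct_eq_zero_of_mulVec_eq_zero hp (hC ▸ exampleCorr_mulVec_kerVec) hk)
  have hnorm : ∀ k, ‖Z k‖ = 1 ∧ ‖Y k‖ = 1 := fun k => by simp [Z, Y, hu]
  have ht : ∀ k, p k ≠ 0 → t k = 1 ∨ t k = -1 := fun k hk =>
    im_eq_one_or_neg_one_of_re_eq_zero (hnorm k).1 (hZ k hk)
  have hpZ : ∀ k, (p k : ℂ) * Z k = (p k * t k : ℝ) * I := fun k => by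
    by_cases hk : p k = 0
    · simp [hk]
    · rw [← re_add_im (Z k), hZ k hk]; push_cast; ring
  have hpt : ∑ k, p k * t k = 0 := by
    have : ((∑ k, p k * t k : ℝ) : ℂ) * I = 0 := calc
      _ = ∑ k, (p k : ℂ) * Z k := by rw [ofReal_sum, sum_mul]; simp only [hpZ]
      _ = 0 := (hentry 1 2).symm
    exact_mod_cast (mul_eq_zero.1 this).resolve_right I_ne_zero
  have hpY : ∑ k, p k • Y k = 0 := by
    simp only [real_smul]; exact (hentry 1 3).symm
  have hptY : ∑ k, (p k * t k) • Y k = 0 := by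
    have hterm : ∀ k, (p k : ℂ) * (u k 2 * conj (u k 3)) = -I * ((p k * t k : ℝ) * Y k) :=
      fun k => by
        rw [← conj_mul_conj_mul_mul_conj (hu k 1), ← mul_assoc, ← conj_ofReal, ← map_mul, hpZ k,
          map_mul, conj_ofReal, conj_I]
        ring
    have : -I * ∑ k, (p k * t k) • Y k = 0 := calc
      _ = ∑ k, (p k : ℂ) * (u k 2 * conj (u k 3)) := by simp only [mul_sum, hterm, real_smul]
      _ = 0 := (hentry 2 3).symm
    simpa [I_ne_zero] using this
  simpa using four_le_card_of_signed_weights hps ht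
    (fun k => norm_ne_zero_iff.1 (by simp [hnorm k])) hpt hpY hptY

lemma toroidalRank_exampleCorr : toroidalRank exampleCorr = 4 :=
  IsLeast.csInf_eq ⟨⟨_, _, isToroidalDecomp_exampleVec⟩,
    fun _ ⟨_, _, h⟩ => four_le_of_isToroidalDecomp_exampleCorr h⟩

end Example

/-- Example 3 of the paper. The explicit `4 × 4` correlation matrix
with off-diagonal entries `1/√2` in positions (1,2),(2,1),(1,3),(3,1) has rank `3` and is
toroidal with toroidal rank `4`. -/
theorem stmt13 (C : Mat (Fin 4))
    (hC : C = !![1, (Real.sqrt 2 : ℂ)⁻¹, (Real.sqrt 2 : ℂ)⁻¹, 0;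
                 (Real.sqrt 2 : ℂ)⁻¹, 1, 0, 0;
                 (Real.sqrt 2 : ℂ)⁻¹, 0, 1, 0;
                 0, 0, 0, 1]) :
    C.rank = 3 ∧ IsToroidal C ∧ toroidalRank C = 4 := by
  subst hC
  exact ⟨rank_exampleCorr, ⟨4, _, _, isToroidalDecomp_exampleVec⟩, toroidalRank_exampleCorr⟩
end

section
/- Let d be a positive integer and suppose there exist d + 1 mutually unbiased orthonormal bases A_1, …, A_{d+1} of ℂ^d, with A_t = {u_{t,1}, …, u_{t,d}}. Define A ∈ M_{d²,d} by A = ∑_{k,j=1}^d (e_k ⊗ e_j) u_{k,j}* (its row indexed by (k,j) is u_{k,j}*) and set C = A A* ∈ M_{d²}. Then C is a correlation matrix with rank(C) = d, C is toroidal with toroidal rank equal to d, and rank(C̄ ⊙ C) = d² − d + 1. -/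
open scoped Kronecker ComplexOrder
open Matrix

/-- Auxiliary: a matrix written as a sum of `N` rank-one terms has rank at most `N`. -/
lemma aux_rank_le_sum {n : Type*} [Fintype n] {N : ℕ}
    (C : Matrix n n ℂ) (c : Fin N → ℂ) (w : Fin N → n → ℂ)
    (h : C = ∑ k, c k • Matrix.vecMulVec (w k) (star (w k))) : C.rank ≤ N := by
  classical
  have hr : LinearMap.range C.mulVecLin ≤ Submodule.span ℂ (Set.range w) := by
    rintro y ⟨x, rfl⟩
    have hx : C.mulVecLin x = ∑ k, (c k * (star (w k) ⬝ᵥ x)) • w k := by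
      rw [Matrix.mulVecLin_apply]
      ext i
      rw [h]
      simp only [Matrix.mulVec, dotProduct, Matrix.sum_apply, Matrix.smul_apply,
        Matrix.vecMulVec_apply, Pi.star_apply, smul_eq_mul, Finset.sum_apply, Pi.smul_apply,
        Finset.sum_mul, Finset.mul_sum]
      rw [Finset.sum_comm]
      exact Finset.sum_congr rfl fun k _ => Finset.sum_congr rfl fun j _ => by ring
    rw [hx]
    exact Submodule.sum_mem _ fun k _ => Submodule.smul_mem _ _ (Submodule.subset_span ⟨k, rfl⟩)
  calc C.rank = Module.finrank ℂ (LinearMap.range C.mulVecLin) := rfl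
    _ ≤ Module.finrank ℂ (Submodule.span ℂ (Set.range w)) := Submodule.finrank_mono hr
    _ ≤ N := by
        have h1 := finrank_span_le_card (R := ℂ) (Set.range w)
        rw [Set.toFinset_range] at h1
        exact h1.trans ((Finset.card_image_le).trans (by simp))

/-- Example 4 of the paper. Given `d + 1` mutually unbiased
orthonormal bases `u t` (`t : Fin (d+1)`) of `ℂ^d`, the matrix `C = A A*`, where the row
of `A` indexed by `(k,j)` is `u_{k,j}*`, is a correlation matrix of rank `d` which is
toroidal with toroidal rank `d`, and `rank (conj C ⊙ C) = d² - d + 1`. -/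
theorem stmt14 (d : ℕ) (hd : 0 < d)
    (u : Fin (d + 1) → Fin d → (Fin d → ℂ))
    (hON : ∀ t j k, (∑ i, (starRingEnd ℂ) (u t j i) * u t k i) =
      if j = k then 1 else 0)
    (hMUB : ∀ s t, s ≠ t → ∀ j k,
      ‖∑ i, (starRingEnd ℂ) (u s j i) * u t k i‖ = 1 / Real.sqrt d)
    (A : Matrix (Fin d × Fin d) (Fin d) ℂ)
    (hA : ∀ (kj : Fin d × Fin d) (i : Fin d), A kj i = (starRingEnd ℂ) (u kj.1.castSucc kj.2 i))
    (C : Mat (Fin d × Fin d)) (hCdef : C = A * Aᴴ) :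
    IsCorrelation C ∧ C.rank = d ∧ IsToroidal C ∧ toroidalRank C = d ∧
      (Matrix.hadamard (C.map (starRingEnd ℂ)) C).rank = d ^ 2 - d + 1 := by
  classical
  have hd0 : (d:ℂ) ≠ 0 := Nat.cast_ne_zero.mpr hd.ne'
  have hdr0 : (d:ℝ) ≠ 0 := Nat.cast_ne_zero.mpr hd.ne'
  -- entry formula for C
  have hCe : ∀ x y : Fin d × Fin d,
      C x y = ∑ i, (starRingEnd ℂ) (u x.1.castSucc x.2 i) * u y.1.castSucc y.2 i := by
    intro x y
    rw [hCdef, Matrix.mul_apply]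
    refine Finset.sum_congr rfl fun i _ => ?_
    rw [Matrix.conjTranspose_apply, hA, hA, Complex.star_def, Complex.conj_conj]
  have hdiag : ∀ x y : Fin d × Fin d, x.1 = y.1 → C x y = if x.2 = y.2 then 1 else 0 := by
    intro x y h
    rw [hCe, h]
    exact hON _ _ _
  have hoff : ∀ x y : Fin d × Fin d, x.1 ≠ y.1 → ‖C x y‖ = 1 / Real.sqrt d := by
    intro x y h
    rw [hCe]
    exact hMUB _ _ (fun he => h (Fin.castSucc_injective _ he)) _ _
  -- each basis gives a unitary
  have hUnit : ∀ t : Fin (d+1),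
      (Matrix.of fun a b => u t b a) * (Matrix.of fun a b => u t b a)ᴴ = 1 := by
    intro t
    rw [mul_eq_one_comm]
    ext j k
    simp only [Matrix.mul_apply, Matrix.conjTranspose_apply, Matrix.of_apply, Matrix.one_apply,
      Complex.star_def]
    exact hON t j k
  have hcomp : ∀ (t : Fin (d+1)) (i i' : Fin d),
      (∑ j, u t j i * (starRingEnd ℂ) (u t j i')) = if i = i' then 1 else 0 := by
    intro t i i'
    have h := congrFun (congrFun (hUnit t) i) i'
    simpa [Matrix.mul_apply, Matrix.conjTranspose_apply, Matrix.one_apply,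
      Complex.star_def] using h
  -- A has orthogonal columns
  have hAHA : Aᴴ * A = (d:ℂ) • 1 := by
    ext i i'
    have lhs : (Aᴴ * A) i i'
        = ∑ x : Fin d × Fin d, u x.1.castSucc x.2 i * (starRingEnd ℂ) (u x.1.castSucc x.2 i') := by
      rw [Matrix.mul_apply]
      refine Finset.sum_congr rfl fun x _ => ?_
      rw [Matrix.conjTranspose_apply, hA, hA, Complex.star_def, Complex.conj_conj]
    rw [lhs, Fintype.sum_prod_type]
    rw [Finset.sum_congr rfl fun k _ => hcomp k.castSucc i i', Finset.sum_const,
      Finset.card_univ, Fintype.card_fin, nsmul_eq_mul]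
    by_cases h : i = i' <;> simp [h, Matrix.one_apply]
  have hcorr : IsCorrelation C := by
    refine ⟨hCdef ▸ Matrix.posSemidef_self_mul_conjTranspose A, fun x => by simpa using hdiag x x rfl⟩
  -- rank of C
  have hrank : C.rank = d := by
    have h1 : C.rank = A.rank := by rw [hCdef, Matrix.rank_self_mul_conjTranspose]
    have h2 : A.rank = (Aᴴ * A).rank := (Matrix.rank_conjTranspose_mul_self A).symm
    have h3 : ((d:ℂ) • (1 : Mat (Fin d))) = Matrix.diagonal (fun _ => (d:ℂ)) := by
      ext a b
      by_cases h : a = b <;> simp [h, Matrix.one_apply, Matrix.diagonal]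
    rw [h1, h2, hAHA, h3, Matrix.rank_diagonal, Fintype.card_subtype,
      Finset.filter_true_of_mem (fun _ _ => hd0)]
    simp
  -- toroidal decomposition
  set Ud : Mat (Fin d) := Matrix.of fun a b => u (Fin.last d) b a with hUd
  have hUdU : Ud * Udᴴ = 1 := hUnit (Fin.last d)
  set B : Matrix (Fin d × Fin d) (Fin d) ℂ := A * Ud with hBdef
  have hBB : B * Bᴴ = C := by
    rw [hBdef, Matrix.conjTranspose_mul, hCdef, Matrix.mul_assoc,
      ← Matrix.mul_assoc Ud Udᴴ Aᴴ, hUdU, Matrix.one_mul]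
  set s : ℂ := ((Real.sqrt d : ℝ) : ℂ) with hs
  set v : Fin d → (Fin d × Fin d) → ℂ := fun m x => s * B x m with hv
  have hsd : (0:ℝ) < Real.sqrt d := Real.sqrt_pos.mpr (by exact_mod_cast hd)
  have hsq : s * s = (d:ℂ) := by
    rw [hs, ← Complex.ofReal_mul, Real.mul_self_sqrt (by positivity)]
    norm_cast
  have hBentry : ∀ (x : Fin d × Fin d) (m : Fin d), ‖B x m‖ = 1 / Real.sqrt d := by
    intro x m
    have hBxm : B x m = ∑ i, (starRingEnd ℂ) (u x.1.castSucc x.2 i) * u (Fin.last d) m i := by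
      rw [hBdef, Matrix.mul_apply]
      exact Finset.sum_congr rfl fun i _ => by rw [hA, hUd]; rfl
    rw [hBxm]
    exact hMUB _ _ (Fin.castSucc_lt_last x.1).ne _ _
  have hvnorm : ∀ (m : Fin d) (x : Fin d × Fin d), ‖v m x‖ = 1 := by
    intro m x
    simp only [hv]
    rw [norm_mul, hBentry]
    have : ‖s‖ = Real.sqrt d := by
      rw [hs, Complex.norm_real, Real.norm_eq_abs, abs_of_nonneg (Real.sqrt_nonneg _)]
    rw [this]
    field_simp
  set p : Fin d → ℝ := fun _ => 1/(d:ℝ) with hp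
  have key : ∀ a b : ℂ, ((1/(d:ℝ) : ℝ) : ℂ) * ((s * a) * star (s * b)) = a * star b := by
    intro a b
    have h2 : (s * a) * star (s * b) = (s * s) * (a * star b) := by
      simp only [star_mul', Complex.star_def, hs, Complex.conj_ofReal]
      ring
    rw [h2, hsq, Complex.ofReal_div, Complex.ofReal_one, Complex.ofReal_natCast, ← mul_assoc,
      one_div, inv_mul_cancel₀ hd0, one_mul]
  have hdecomp : C = ∑ m, ((p m : ℝ) : ℂ) • Matrix.vecMulVec (v m) (star (v m)) := by
    rw [← hBB]
    ext x y
    simp only [Matrix.sum_apply, Matrix.smul_apply, Matrix.vecMulVec_apply, Pi.star_apply, hv,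
      hp, smul_eq_mul, Matrix.mul_apply, Matrix.conjTranspose_apply]
    exact (Finset.sum_congr rfl fun m _ => (key (B x m) (B y m)).symm)
  have htd : IsToroidalDecomp C p v := by
    refine ⟨fun k => by rw [hp]; positivity, ?_, hvnorm, hdecomp⟩
    rw [hp, Finset.sum_const, Finset.card_univ, Fintype.card_fin, nsmul_eq_mul]
    field_simp
  have hTset : d ∈ {N : ℕ | ∃ (q : Fin N → ℝ) (w : Fin N → (Fin d × Fin d) → ℂ),
      IsToroidalDecomp C q w} := ⟨p, v, htd⟩
  have htrank : toroidalRank C = d := by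
    refine le_antisymm (Nat.sInf_le hTset) (le_csInf ⟨d, hTset⟩ ?_)
    rintro N ⟨q, w, hq0, hq1, hw, hCw⟩
    have hle := aux_rank_le_sum C (fun k => ((q k : ℝ) : ℂ)) w hCw
    rw [hrank] at hle
    exact hle
  -- the Hadamard product
  set M : Mat (Fin d × Fin d) := Matrix.of
    (fun x y => if x.1 = y.1 then (if x.2 = y.2 then (1:ℂ) else 0) else (1/(d:ℂ))) with hM
  have hHad : Matrix.hadamard (C.map (starRingEnd ℂ)) C = M := by
    ext x y
    rw [Matrix.hadamard_apply, Matrix.map_apply, hM]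
    by_cases h1 : x.1 = y.1
    · rw [hdiag x y h1, Matrix.of_apply, if_pos h1]
      by_cases h2 : x.2 = y.2 <;> simp [h2]
    · rw [Matrix.of_apply, if_neg h1]
      have h3 : (starRingEnd ℂ) (C x y) * C x y = ((‖C x y‖ ^ 2 : ℝ) : ℂ) := by
        rw [mul_comm, Complex.mul_conj]
        norm_cast
        rw [Complex.normSq_eq_norm_sq]
      rw [h3, hoff x y h1, div_pow, one_pow, Real.sq_sqrt (by positivity : (0:ℝ) ≤ (d:ℝ))]
      push_cast
      ring
  -- action of M on vectors
  have hMx : ∀ (x : (Fin d × Fin d) → ℂ) (k j : Fin d),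
      (M *ᵥ x) (k, j) = x (k,j) + (1/(d:ℂ)) * ((∑ q : Fin d × Fin d, x q) - ∑ j', x (k, j')) := by
    intro x k j
    have e1 : (M *ᵥ x) (k,j) = ∑ k' : Fin d, ∑ j' : Fin d,
        (if k = k' then (if j = j' then (1:ℂ) else 0) else (1/(d:ℂ))) * x (k',j') := by
      simp [hM, Matrix.mulVec, dotProduct, Fintype.sum_prod_type]
    rw [e1, ← Finset.add_sum_erase _ _ (Finset.mem_univ k)]
    congr 1
    · simp
    · have h4 : ∀ k' ∈ Finset.univ.erase k, (∑ j' : Fin d,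
          (if k = k' then (if j = j' then (1:ℂ) else 0) else (1/(d:ℂ))) * x (k',j'))
          = (1/(d:ℂ)) * ∑ j', x (k',j') := by
        intro k' hk'
        rw [Finset.mem_erase] at hk'
        simp only [if_neg (Ne.symm hk'.1)]
        rw [Finset.mul_sum]
      rw [Finset.sum_congr rfl h4, ← Finset.mul_sum]
      congr 1
      rw [Finset.sum_erase_eq_sub (Finset.mem_univ k), Fintype.sum_prod_type]
  -- the kernel of M
  set φ : (Fin d → ℂ) →ₗ[ℂ] ((Fin d × Fin d) → ℂ) :=
    { toFun := fun c q => c q.1, map_add' := fun _ _ => rfl, map_smul' := fun _ _ => rfl } with hφ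
  set σ : (Fin d → ℂ) →ₗ[ℂ] ℂ :=
    { toFun := fun c => ∑ k, c k,
      map_add' := fun _ _ => by simp [Finset.sum_add_distrib],
      map_smul' := fun _ _ => by simp [Finset.mul_sum] } with hσ
  have hφapp : ∀ (c : Fin d → ℂ) (q : Fin d × Fin d), φ c q = c q.1 := fun _ _ => rfl
  have hσapp : ∀ c : Fin d → ℂ, σ c = ∑ k, c k := fun _ => rfl
  have hφinj : Function.Injective φ := by
    intro a b h
    funext k
    exact congrFun h (k, ⟨0, hd⟩)
  have hker : LinearMap.ker M.mulVecLin = Submodule.map φ (LinearMap.ker σ) := by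
    ext x
    simp only [LinearMap.mem_ker, Submodule.mem_map]
    rw [Matrix.mulVecLin_apply]
    constructor
    · intro hx
      have hx' : ∀ k j, x (k,j) + (1/(d:ℂ)) * ((∑ q : Fin d × Fin d, x q) - ∑ j', x (k,j')) = 0 := by
        intro k j
        have h := congrFun hx (k,j)
        rw [hMx] at h
        simpa using h
      have hS0 : (∑ q : Fin d × Fin d, x q) = 0 := by
        have h1 : ∑ j : Fin d, (x ((⟨0,hd⟩ : Fin d), j)
            + (1/(d:ℂ)) * ((∑ q : Fin d × Fin d, x q) - ∑ j', x (⟨0,hd⟩, j'))) = 0 :=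
          Finset.sum_eq_zero fun j _ => hx' ⟨0,hd⟩ j
        rw [Finset.sum_add_distrib, Finset.sum_const, Finset.card_univ, Fintype.card_fin,
          nsmul_eq_mul] at h1
        have h2 : (d:ℂ) * ((1/(d:ℂ)) * ((∑ q : Fin d × Fin d, x q) - ∑ j', x (⟨0,hd⟩, j')))
            = (∑ q : Fin d × Fin d, x q) - ∑ j', x (⟨0,hd⟩, j') := by
          field_simp
        rw [h2] at h1
        linear_combination h1
      refine ⟨fun k => x (k, ⟨0, hd⟩), ?_, ?_⟩
      · rw [hσapp]
        have h5 : ∀ k : Fin d, x (k, (⟨0,hd⟩ : Fin d)) = (1/(d:ℂ)) * ∑ j', x (k, j') := by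
          intro k
          have h := hx' k ⟨0,hd⟩
          rw [hS0] at h
          linear_combination h
        rw [Finset.sum_congr rfl fun k _ => h5 k, ← Finset.mul_sum]
        rw [show (∑ k : Fin d, ∑ j', x (k, j')) = ∑ q : Fin d × Fin d, x q from
          (Fintype.sum_prod_type _).symm, hS0, mul_zero]
      · funext q
        obtain ⟨k, j⟩ := q
        rw [hφapp]
        linear_combination hx' k ⟨0,hd⟩ - hx' k j
    · rintro ⟨c, hc, rfl⟩
      rw [hσapp] at hc
      funext q
      obtain ⟨k, j⟩ := q
      rw [hMx, Pi.zero_apply]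
      have h1 : (∑ q : Fin d × Fin d, φ c q) = (d:ℂ) * ∑ k, c k := by
        rw [Fintype.sum_prod_type]
        simp only [hφapp]
        rw [Finset.mul_sum]
        exact Finset.sum_congr rfl fun k _ => by
          rw [Finset.sum_const, Finset.card_univ, Fintype.card_fin, nsmul_eq_mul]
      have h2 : (∑ j' : Fin d, φ c (k, j')) = (d:ℂ) * c k := by
        simp only [hφapp]
        rw [Finset.sum_const, Finset.card_univ, Fintype.card_fin, nsmul_eq_mul]
      rw [hφapp, h1, h2, hc, mul_zero]
      field_simp
      ring
  have hσsurj : Function.Surjective σ := by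
    intro z
    refine ⟨fun _ => z / d, ?_⟩
    rw [hσapp, Finset.sum_const, Finset.card_univ, Fintype.card_fin, nsmul_eq_mul]
    field_simp
  have hkσ : Module.finrank ℂ (LinearMap.ker σ) = d - 1 := by
    have h := LinearMap.finrank_range_add_finrank_ker σ
    rw [LinearMap.range_eq_top.mpr hσsurj, finrank_top, Module.finrank_self,
      Module.finrank_fin_fun] at h
    omega
  have hmapeq : Module.finrank ℂ (Submodule.map φ (LinearMap.ker σ))
      = Module.finrank ℂ (LinearMap.ker σ) :=
    (Submodule.equivMapOfInjective φ hφinj (LinearMap.ker σ)).symm.finrank_eq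
  have hrankM : M.rank = d^2 - d + 1 := by
    have h := LinearMap.finrank_range_add_finrank_ker M.mulVecLin
    have hdom : Module.finrank ℂ ((Fin d × Fin d) → ℂ) = d^2 := by
      rw [Module.finrank_pi, Fintype.card_prod, Fintype.card_fin, sq]
    rw [hdom, hker, hmapeq, hkσ] at h
    have hrM : M.rank = Module.finrank ℂ (LinearMap.range M.mulVecLin) := rfl
    rw [hrM]
    have hdd : d ≤ d^2 := by nlinarith
    omega
  refine ⟨hcorr, hrank, ⟨d, p, v, htd⟩, htrank, ?_⟩
  rw [hHad]
  exact hrankM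
end

section
/- Let n be a positive integer and let Φ : M_n → M_n be a quantum channel. Then the following are equivalent: (1) Φ is unitarily equivalent to a Schur channel, i.e., there exist unitary matrices U, V ∈ M_n and a correlation matrix C ∈ M_n such that U Φ(V X V*) U* = C ⊙ X for all X ∈ M_n; (2) the operator system S_Φ of Φ is a commuting family of matrices (every pair of elements of S_Φ commutes). -/
open scoped Kronecker ComplexOrder
open Matrix

/-!
If `W Φ(V X V*) W* = C ⊙ X` and `C = ∑ₚ dₚ dₚ*`, then `Φ` has the Kraus operators
`W* diag(dₚ) V*`. Two Kraus families of the same map span the same space (the Gram matrices of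
their vectorisations coincide, hence so do their kernels), so every Kraus operator of `Φ` is of
the form `W* diag(a) V*` and all products `Aⱼ* Aₖ` lie in the commutative algebra `V diag(ℂⁿ) V*`.

Conversely, the products `Aⱼ* Aₖ` generate a commutative *-algebra, which is diagonalised by a
unitary `V`. The Kraus operators `Bₚ = Aₚ V` then have `Bⱼ* Bₖ` diagonal: columns of the `Bₚ` with
different indices are orthogonal. Normalising, for each index `i`, one nonzero `i`-th column
gives the rows of a unitary `W` with every `W Bₚ = diag(eₚ)` diagonal, and then
`W Φ(V X V*) W* = (∑ₚ eₚ eₚ*) ⊙ X`.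
-/

lemma conjTranspose_mul_self_of_vec_eq_of_sum_eq {α β ι κ : Type*} [Fintype α] [DecidableEq α]
    [Fintype ι] [Fintype κ] {A : ι → Matrix β α ℂ} {B : κ → Matrix β α ℂ}
    (h : ∀ X : Matrix α α ℂ, ∑ j, A j * X * (A j)ᴴ = ∑ k, B k * X * (B k)ᴴ) :
    (Matrix.of fun j => (A j).vec)ᴴ * (Matrix.of fun j => (A j).vec) =
      (Matrix.of fun k => (B k).vec)ᴴ * (Matrix.of fun k => (B k).vec) := by
  ext x y
  simpa [Matrix.sum_apply, mul_apply, single_apply, ite_and, vec, mul_comm] using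
    congr($(h (single y.1 x.1 1)) y.2 x.2)

lemma of_vec_mulVec_eq_dual_apply {α β ι : Type*} [Fintype α] [Fintype β] [DecidableEq α]
    [DecidableEq β] (f : Module.Dual ℂ (Matrix β α ℂ)) (A : ι → Matrix β α ℂ) :
    Matrix.of (fun j => (A j).vec) *ᵥ (fun x => f (single x.2 x.1 1)) = fun j => f (A j) := by
  funext j
  conv_rhs => rw [matrix_eq_sum_single (A j)]
  simp only [mulVec, dotProduct, of_apply, map_sum, Fintype.sum_prod_type, vec]
  rw [Finset.sum_comm]
  refine Finset.sum_congr rfl fun a _ => Finset.sum_congr rfl fun b _ => ?_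
  rw [← smul_eq_mul, ← map_smul, smul_single, smul_eq_mul, mul_one]

lemma mem_span_range_of_sum_mul_mul_conjTranspose_eq {α β ι κ : Type*} [Fintype α] [Fintype β]
    [DecidableEq α] [DecidableEq β] [Fintype ι] [Fintype κ]
    {A : ι → Matrix β α ℂ} {B : κ → Matrix β α ℂ}
    (h : ∀ X : Matrix α α ℂ, ∑ j, A j * X * (A j)ᴴ = ∑ k, B k * X * (B k)ᴴ) (j : ι) :
    A j ∈ Submodule.span ℂ (Set.range B) := by
  by_contra hj
  obtain ⟨f, hfA, hfB⟩ := Submodule.exists_le_ker_of_notMem hj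
  have hB : Matrix.of (fun k => (B k).vec) *ᵥ (fun x => f (single x.2 x.1 1)) = 0 := by
    rw [of_vec_mulVec_eq_dual_apply]
    exact funext fun k => hfB (Submodule.subset_span ⟨k, rfl⟩)
  have hA : Matrix.of (fun j => (A j).vec) *ᵥ (fun x => f (single x.2 x.1 1)) = 0 := by
    rwa [← conjTranspose_mul_self_mulVec_eq_zero, conjTranspose_mul_self_of_vec_eq_of_sum_eq h,
      conjTranspose_mul_self_mulVec_eq_zero]
  rw [of_vec_mulVec_eq_dual_apply] at hA
  exact hfA (congr_fun hA j)

lemma sum_vecMulVec_star_hadamard {α κ : Type*} [Fintype α] [Fintype κ] [DecidableEq α]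
    (d : κ → α → ℂ) (X : Matrix α α ℂ) :
    (∑ p, vecMulVec (d p) (star (d p))) ⊙ X =
      ∑ p, Matrix.diagonal (d p) * X * (Matrix.diagonal (d p))ᴴ := by
  ext i l
  simp only [hadamard_apply, Matrix.sum_apply, vecMulVec_apply, Finset.sum_mul]
  simp only [diagonal_conjTranspose, mul_diagonal, diagonal_mul, Pi.star_apply]
  exact Finset.sum_congr rfl fun _ _ => by ring

lemma exists_eq_mul_diagonal_mul_of_mem_span {α β γ κ R : Type*} [CommSemiring R] [Fintype α]
    [Fintype κ] [DecidableEq α] {U : Matrix β α R} {V : Matrix α γ R} {d : κ → α → R}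
    {A : Matrix β γ R}
    (hA : A ∈ Submodule.span R (Set.range fun p => U * Matrix.diagonal (d p) * V)) :
    ∃ e : α → R, A = U * Matrix.diagonal e * V := by
  obtain ⟨c, rfl⟩ := (Submodule.mem_span_range_iff_exists_fun R).mp hA
  refine ⟨∑ p, c p • d p, ?_⟩
  have := map_sum (diagonalAddMonoidHom α R) (fun p => c p • d p) Finset.univ
  simp only [diagonalAddMonoidHom_apply] at this
  simp [this, Matrix.mul_sum, Matrix.sum_mul, diagonal_smul, Matrix.mul_smul, Matrix.smul_mul]

lemma Commute.mul_mul_of_mul_eq_one {M : Type*} [Monoid M] {a b x y : M} (hba : b * a = 1)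
    (h : Commute x y) : Commute (a * x * b) (a * y * b) := by
  simp only [Commute, SemiconjBy, mul_assoc]
  rw [← mul_assoc b a, hba, one_mul, ← mul_assoc b a, hba, one_mul, ← mul_assoc x, h.eq,
    mul_assoc y]

open Module.End in
lemma LinearMap.IsSymmetric.exists_orthonormalBasis_apply_eq_smul_of_commute
    {𝕜 E ι : Type*} [RCLike 𝕜] [NormedAddCommGroup E] [InnerProductSpace 𝕜 E]
    [FiniteDimensional 𝕜 E] {T : ι → Module.End 𝕜 E} (hT : ∀ i, (T i).IsSymmetric)
    (hC : Pairwise fun i j => Commute (T i) (T j)) :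
    ∃ (b : OrthonormalBasis (Fin (Module.finrank 𝕜 E)) 𝕜 E)
      (χ : Fin (Module.finrank 𝕜 E) → ι → 𝕜), ∀ a i, T i (b a) = χ a i • b a := by
  classical
  set V : (ι → 𝕜) → Submodule 𝕜 E := fun χ => ⨅ i, eigenspace (T i) (χ i)
  have hint : DirectSum.IsInternal fun χ : {χ // V χ ≠ ⊥} => V χ :=
    DirectSum.isInternal_ne_bot_iff.mpr (directSum_isInternal_of_pairwise_commute hT hC)
  have horth := (orthogonalFamily_iInf_eigenspaces hT).comp
    (Subtype.val_injective (p := fun χ => V χ ≠ ⊥))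
  have : Finite {χ // V χ ≠ ⊥} :=
    (Submodule.finite_ne_bot_of_iSupIndep
      (orthogonalFamily_iInf_eigenspaces hT).independent).to_subtype
  have := Fintype.ofFinite {χ // V χ ≠ ⊥}
  refine ⟨hint.subordinateOrthonormalBasis rfl horth,
    fun a => (hint.subordinateOrthonormalBasisIndex rfl a horth).1, fun a i => ?_⟩
  exact mem_eigenspace_iff.mp
    ((Submodule.mem_iInf _).mp (hint.subordinateOrthonormalBasis_subordinate rfl a horth) i)

lemma exists_unitary_mul_eq_mul_diagonal_of_isHermitian {𝕜 m ι : Type*} [RCLike 𝕜] [Fintype m]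
    [DecidableEq m] {H : ι → Matrix m m 𝕜} (hH : ∀ i, (H i).IsHermitian)
    (hC : ∀ i j, Commute (H i) (H j)) :
    ∃ U ∈ unitaryGroup m 𝕜, ∀ i, ∃ d : m → 𝕜, H i * U = U * Matrix.diagonal d := by
  obtain ⟨b, χ, hb⟩ := LinearMap.IsSymmetric.exists_orthonormalBasis_apply_eq_smul_of_commute
    (T := fun i => toEuclideanLin (H i)) (fun i => isSymmetric_toEuclideanLin_iff.mpr (hH i))
    (fun i j _ => (hC i j).map (toLpLinAlgEquiv 2))
  set e : Fin (Module.finrank 𝕜 (EuclideanSpace 𝕜 m)) ≃ m :=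
    (finCongr finrank_euclideanSpace).trans (Fintype.equivFin m).symm
  refine ⟨(EuclideanSpace.basisFun m 𝕜).toBasis.toMatrix (b.reindex e),
    OrthonormalBasis.toMatrix_orthonormalBasis_mem_unitary _ _,
    fun i => ⟨fun a => χ (e.symm a) i, ?_⟩⟩
  ext x a
  rw [mul_diagonal]
  simpa [Module.Basis.toMatrix_apply, mul_apply, toLpLin_apply, mulVec, dotProduct, mul_comm]
    using congr(WithLp.ofLp $(hb (e.symm a) i) x)

open ComplexStarModule in
lemma StarSubalgebra.exists_unitary_mul_eq_mul_diagonal {m : Type*} [Fintype m] [DecidableEq m]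
    (S : StarSubalgebra ℂ (Matrix m m ℂ)) [IsMulCommutative S] :
    ∃ U ∈ unitaryGroup m ℂ, ∀ x ∈ S, ∃ d : m → ℂ, x * U = U * Matrix.diagonal d := by
  obtain ⟨U, hU, hdiag⟩ := exists_unitary_mul_eq_mul_diagonal_of_isHermitian
    (H := fun x : {x // x ∈ S ∧ IsSelfAdjoint x} => x.1) (fun x => x.2.2)
    (fun x y => setLike_mul_comm x.2.1 y.2.1)
  refine ⟨U, hU, fun x hx => ?_⟩
  have hre : (ℜ x : Matrix m m ℂ) ∈ S := by
    rw [realPart_apply_coe, ← algebraMap_smul ℂ]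
    exact S.smul_mem (add_mem hx (star_mem hx)) _
  have him : (ℑ x : Matrix m m ℂ) ∈ S := by
    rw [imaginaryPart_apply_coe, ← algebraMap_smul ℂ (2⁻¹ : ℝ)]
    exact S.smul_mem (S.smul_mem (sub_mem hx (star_mem hx)) _) _
  obtain ⟨d₁, hd₁⟩ := hdiag ⟨ℜ x, hre, (ℜ x).2⟩
  obtain ⟨d₂, hd₂⟩ := hdiag ⟨ℑ x, him, (ℑ x).2⟩
  refine ⟨d₁ + Complex.I • d₂, ?_⟩
  rw [← realPart_add_I_smul_imaginaryPart x, add_mul, smul_mul_assoc, hd₁, hd₂,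
    ← mul_smul_comm, ← mul_add, ← diagonal_smul, diagonal_add]
  rfl

lemma diagonal_inv_sqrt_mul_mem_unitaryGroup {m : Type*} [Fintype m] [DecidableEq m]
    {R : Matrix m m ℂ} {ρ : m → ℝ} (hR : R * Rᴴ = Matrix.diagonal fun i => (ρ i : ℂ))
    (hρ : ∀ i, 0 < ρ i) :
    Matrix.diagonal (fun i => ((√(ρ i) : ℝ) : ℂ)⁻¹) * R ∈ unitaryGroup m ℂ := by
  rw [mem_unitaryGroup_iff, star_eq_conjTranspose, conjTranspose_mul, diagonal_conjTranspose,
    Matrix.mul_assoc, ← Matrix.mul_assoc R, hR, diagonal_mul_diagonal, diagonal_mul_diagonal,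
    ← diagonal_one]
  congr 1
  funext i
  have hs : (√(ρ i) : ℂ) ≠ 0 := Complex.ofReal_ne_zero.mpr (Real.sqrt_pos.mpr (hρ i)).ne'
  simp only [Pi.star_apply, star_inv₀, Complex.star_def, Complex.conj_ofReal]
  field_simp
  rw [← Complex.ofReal_pow, Real.sq_sqrt (hρ i).le]

lemma exists_unitary_forall_mul_eq_diagonal {ι m : Type*} [Fintype ι] [Fintype m]
    [DecidableEq m] {B : ι → Matrix m m ℂ}
    (hdiag : ∀ j k, ∃ d : m → ℂ, (B j)ᴴ * B k = Matrix.diagonal d)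
    (hsum : ∑ p, (B p)ᴴ * B p = 1) :
    ∃ W ∈ unitaryGroup m ℂ, ∀ p, ∃ e : m → ℂ, W * B p = Matrix.diagonal e := by
  choose g hg using hdiag
  have hex : ∀ i, ∃ p, g p p i ≠ 0 := by
    intro i
    by_contra! h
    simpa [Matrix.sum_apply, hg, h] using congr($hsum i i)
  choose k hk using hex
  have hpos : ∀ i, 0 < g (k i) (k i) i := fun i =>
    lt_of_le_of_ne (by simpa [hg] using (posSemidef_conjTranspose_mul_self (B (k i))).diag_nonneg)
      (hk i).symm
  choose ρ hρ hρg using fun i => RCLike.pos_iff_exists_ofReal.mp (hpos i)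
  set R : Matrix m m ℂ := Matrix.of fun i x => star (B (k i) x i)
  have hRR : R * Rᴴ = Matrix.diagonal fun i => (ρ i : ℂ) := by
    ext i l
    have : (R * Rᴴ) i l = ((B (k i))ᴴ * B (k l)) i l := by simp [R, mul_apply]
    rw [this, hg]
    by_cases h : i = l
    · simp [h, ← hρg]
    · simp [h]
  have hRB : ∀ p, R * B p = Matrix.diagonal fun i => g (k i) p i := by
    intro p
    ext i l
    have : (R * B p) i l = ((B (k i))ᴴ * B p) i l := by simp [R, mul_apply]
    rw [this, hg]
    by_cases h : i = l <;> simp [h]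
  refine ⟨_, diagonal_inv_sqrt_mul_mem_unitaryGroup hRR hρ, fun p => ?_⟩
  rw [Matrix.mul_assoc, hRB, diagonal_mul_diagonal]
  exact ⟨_, rfl⟩

lemma apply_eq_sum_of_mul_apply_mul_eq_hadamard {α κ : Type*} [Fintype α] [DecidableEq α]
    [Fintype κ] {Φ : Mat α →ₗ[ℂ] Mat α} {W V : Mat α} (hW : Wᴴ * W = 1) (hV : V * Vᴴ = 1)
    {d : κ → α → ℂ} (hΦ : ∀ X, W * Φ (V * X * Vᴴ) * Wᴴ = (∑ p, vecMulVec (d p) (star (d p))) ⊙ X)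
    (X : Mat α) :
    Φ X = ∑ p, (Wᴴ * Matrix.diagonal (d p) * Vᴴ) * X * (Wᴴ * Matrix.diagonal (d p) * Vᴴ)ᴴ := by
  have hX : V * (Vᴴ * X * V) * Vᴴ = X := by
    rw [show V * (Vᴴ * X * V) * Vᴴ = (V * Vᴴ) * X * (V * Vᴴ) by simp only [Matrix.mul_assoc],
      hV, Matrix.one_mul, Matrix.mul_one]
  calc Φ X = (Wᴴ * W) * Φ X * (Wᴴ * W) := by rw [hW, Matrix.one_mul, Matrix.mul_one]
    _ = Wᴴ * (W * Φ (V * (Vᴴ * X * V) * Vᴴ) * Wᴴ) * W := by rw [hX]; simp only [Matrix.mul_assoc]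
    _ = _ := by
      rw [hΦ, sum_vecMulVec_star_hadamard, Matrix.mul_sum, Matrix.sum_mul]
      simp only [conjTranspose_mul, conjTranspose_conjTranspose, Matrix.mul_assoc]

lemma commute_conjTranspose_mul_of_eq_hadamard {α : Type*} [Fintype α] [DecidableEq α]
    {Φ : Mat α →ₗ[ℂ] Mat α} {W V C : Mat α} (hW : W ∈ unitaryGroup α ℂ)
    (hV : V ∈ unitaryGroup α ℂ) (hC : C.PosSemidef)
    (hΦ : ∀ X, W * Φ (V * X * Vᴴ) * Wᴴ = C ⊙ X) {r : ℕ} {A : Fin r → Mat α}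
    (hA : ∀ X, Φ X = ∑ k, A k * X * (A k)ᴴ) (j k j' k' : Fin r) :
    Commute ((A j)ᴴ * A k) ((A j')ᴴ * A k') := by
  have hW₁ : Wᴴ * W = 1 := Unitary.star_mul_self_of_mem hW
  have hW₂ : W * Wᴴ = 1 := Unitary.mul_star_self_of_mem hW
  have hV₁ : Vᴴ * V = 1 := Unitary.star_mul_self_of_mem hV
  have hV₂ : V * Vᴴ = 1 := Unitary.mul_star_self_of_mem hV
  obtain ⟨N, d, rfl⟩ := posSemidef_iff_eq_sum_vecMulVec.mp hC
  have hdiag : ∀ j, ∃ e : α → ℂ, A j = Wᴴ * Matrix.diagonal e * Vᴴ := fun j =>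
    exists_eq_mul_diagonal_mul_of_mem_span <| mem_span_range_of_sum_mul_mul_conjTranspose_eq
      (fun X => by rw [← hA, apply_eq_sum_of_mul_apply_mul_eq_hadamard hW₁ hV₂ hΦ]) j
  have hprod : ∀ j k, ∃ f : α → ℂ, (A j)ᴴ * A k = V * Matrix.diagonal f * Vᴴ := by
    intro j k
    obtain ⟨e, he⟩ := hdiag j
    obtain ⟨e', he'⟩ := hdiag k
    refine ⟨star e * e', ?_⟩
    rw [he, he']
    simp only [conjTranspose_mul, conjTranspose_conjTranspose, diagonal_conjTranspose,
      Matrix.mul_assoc]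
    rw [← Matrix.mul_assoc W, hW₂, Matrix.one_mul,
      ← Matrix.mul_assoc (Matrix.diagonal _), diagonal_mul_diagonal]
    rfl
  obtain ⟨f, hf⟩ := hprod j k
  obtain ⟨f', hf'⟩ := hprod j' k'
  rw [hf, hf']
  exact (commute_diagonal f f').mul_mul_of_mul_eq_one hV₁

lemma exists_unitary_conjTranspose_mul_eq_diagonal_of_commute {α ι : Type*} [Fintype α]
    [DecidableEq α] {A : ι → Mat α}
    (hcomm : ∀ j k j' k', Commute ((A j)ᴴ * A k) ((A j')ᴴ * A k')) :
    ∃ V ∈ unitaryGroup α ℂ, ∀ j k, ∃ d : α → ℂ,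
      (A j * V)ᴴ * (A k * V) = Matrix.diagonal d := by
  set S := StarAlgebra.adjoin ℂ {M : Mat α | ∃ j k, M = (A j)ᴴ * A k}
  have : IsMulCommutative S := by
    refine StarAlgebra.isMulCommutative_adjoin ℂ ?_ ?_
    · rintro _ ⟨j, k, rfl⟩ _ ⟨j', k', rfl⟩
      exact hcomm j k j' k'
    · rintro _ ⟨j, k, rfl⟩ _ ⟨j', k', rfl⟩
      rw [star_eq_conjTranspose, conjTranspose_mul, conjTranspose_conjTranspose]
      exact hcomm j k k' j'
  obtain ⟨V, hV, hVdiag⟩ := S.exists_unitary_mul_eq_mul_diagonal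
  have hV₁ : Vᴴ * V = 1 := Unitary.star_mul_self_of_mem hV
  refine ⟨V, hV, fun j k => ?_⟩
  obtain ⟨d, hd⟩ := hVdiag _ (StarAlgebra.subset_adjoin ℂ _ ⟨j, k, rfl⟩)
  refine ⟨d, ?_⟩
  rw [conjTranspose_mul, Matrix.mul_assoc, ← Matrix.mul_assoc (A j)ᴴ, hd, ← Matrix.mul_assoc,
    hV₁, Matrix.one_mul]

lemma exists_eq_hadamard_of_commute {α : Type*} [Fintype α] [DecidableEq α]
    {Φ : Mat α →ₗ[ℂ] Mat α} {r : ℕ} {A : Fin r → Mat α} (hA : IsKrausRep Φ A)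
    (hcomm : ∀ j k j' k', Commute ((A j)ᴴ * A k) ((A j')ᴴ * A k')) :
    ∃ W V : Mat α, W ∈ unitaryGroup α ℂ ∧ V ∈ unitaryGroup α ℂ ∧
      ∃ C : Mat α, IsCorrelation C ∧ ∀ X, W * Φ (V * X * Vᴴ) * Wᴴ = C ⊙ X := by
  obtain ⟨V, hV, hB⟩ := exists_unitary_conjTranspose_mul_eq_diagonal_of_commute hcomm
  have hV₁ : Vᴴ * V = 1 := Unitary.star_mul_self_of_mem hV
  have hBsum : ∑ p, (A p * V)ᴴ * (A p * V) = 1 :=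
    calc ∑ p, (A p * V)ᴴ * (A p * V) = ∑ p, Vᴴ * ((A p)ᴴ * A p) * V := by
          simp only [conjTranspose_mul, Matrix.mul_assoc]
      _ = Vᴴ * (∑ p, (A p)ᴴ * A p) * V := by rw [Matrix.mul_sum, Matrix.sum_mul]
      _ = 1 := by rw [hA.2, Matrix.mul_one, hV₁]
  obtain ⟨W, hW, hWdiag⟩ := exists_unitary_forall_mul_eq_diagonal hB hBsum
  have hW₁ : Wᴴ * W = 1 := Unitary.star_mul_self_of_mem hW
  choose e he using hWdiag
  refine ⟨W, V, hW, hV, ∑ p, vecMulVec (e p) (star (e p)),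
    ⟨posSemidef_iff_eq_sum_vecMulVec.mpr ⟨r, e, rfl⟩, fun i => ?_⟩, fun X => ?_⟩
  · have h : ∑ p, (W * (A p * V))ᴴ * (W * (A p * V)) = 1 := by
      simpa only [conjTranspose_mul, Matrix.mul_assoc, ← Matrix.mul_assoc Wᴴ,
        hW₁, Matrix.one_mul] using hBsum
    simp only [he, diagonal_conjTranspose, diagonal_mul_diagonal] at h
    simpa [Matrix.sum_apply, vecMulVec_apply, mul_comm] using congr($h i i)
  · rw [sum_vecMulVec_star_hadamard, hA.1, Matrix.mul_sum, Matrix.sum_mul]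
    refine Finset.sum_congr rfl fun p _ => ?_
    rw [← he p]
    simp only [conjTranspose_mul, Matrix.mul_assoc]

theorem stmt19_general (n : ℕ)
    (Φ : Mat (Fin n) →ₗ[ℂ] Mat (Fin n)) (hΦ : IsChannel Φ) :
    (∃ W V : Mat (Fin n), W ∈ Matrix.unitaryGroup (Fin n) ℂ ∧
        V ∈ Matrix.unitaryGroup (Fin n) ℂ ∧
        ∃ C : Mat (Fin n), IsCorrelation C ∧
          ∀ X, W * Φ (V * X * Vᴴ) * Wᴴ = Matrix.hadamard C X) ↔
      (∀ (r : ℕ) (A : Fin r → Mat (Fin n)), IsKrausRep Φ A →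
        ∀ j k j' k', Commute ((A j)ᴴ * A k) ((A j')ᴴ * A k')) := by
  constructor
  · rintro ⟨W, V, hW, hV, C, hC, hSchur⟩ r A hA
    exact commute_conjTranspose_mul_of_eq_hadamard hW hV hC.1 hSchur hA.1
  · intro hcomm
    obtain ⟨r, A, hA⟩ := hΦ
    exact exists_eq_hadamard_of_commute hA (hcomm r A hA)

/-- Theorem 14 of the paper. A channel `Φ : M_n → M_n` is unitarily
equivalent to a Schur channel iff its operator system is a commuting family. -/
theorem stmt19 (n : ℕ) (hn : 0 < n)
    (Φ : Mat (Fin n) →ₗ[ℂ] Mat (Fin n)) (hΦ : IsChannel Φ) :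
    (∃ W V : Mat (Fin n), W ∈ Matrix.unitaryGroup (Fin n) ℂ ∧
        V ∈ Matrix.unitaryGroup (Fin n) ℂ ∧
        ∃ C : Mat (Fin n), IsCorrelation C ∧
          ∀ X, W * Φ (V * X * Vᴴ) * Wᴴ = Matrix.hadamard C X) ↔
      (∀ (r : ℕ) (A : Fin r → Mat (Fin n)), IsKrausRep Φ A →
        ∀ j k j' k', Commute ((A j)ᴴ * A k) ((A j')ᴴ * A k')) :=
  stmt19_general n Φ hΦ
end
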